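/- arXiv:1706.00161 — 5 statements merged into one kernel-verified Lean document; each statement's English description precedes it below -/
import Mathlib

section
/- Assume (H1) and let 0 < l ≤ h. If x : (1,1+l] → ℝ is continuous and satisfies |(log t)^{1-γ} x(t) - x₀| ≤ b for all t ∈ (1,1+l], then for all t ∈ (1,1+l]: |(1/Γ(α)) ∫₁ᵗ (log(t/s))^{α-1} f(s, x(s)) ds/s| ≤ M (log t)^{α+k} Γ(k+1)/Γ(α+k+1). -/
/-!
Writing `x s = (log s)^(γ-1) * ((log s)^(1-γ) * x s)` with the bracket in `[x₀ - b, x₀ + b]`,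
(H1) gives `|f(s, x s)| ≤ M (log s)^k`. This reduces the claim to the integral
`∫₁ᵗ (log (t/s))^(α-1) (log s)^k ds/s`, which the substitution `s = t^u` turns into
`(log t)^(α+k) B(k+1, α) = (log t)^(α+k) Γ(k+1) Γ(α) / Γ(α+k+1)`.
-/

open Real MeasureTheory intervalIntegral Set

lemma ofReal_betaIntegrand {p q s : ℝ} (hs : s ∈ Icc (0:ℝ) 1) :
    ((s : ℂ) ^ ((p : ℂ) - 1) * (1 - (s : ℂ)) ^ ((q : ℂ) - 1)) =
      ((s ^ (p - 1) * (1 - s) ^ (q - 1) : ℝ) : ℂ) := by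
  push_cast
  rw [Complex.ofReal_cpow hs.1, Complex.ofReal_cpow (sub_nonneg.mpr hs.2)]
  push_cast
  rfl

lemma intervalIntegrable_rpow_mul_one_sub_rpow {p q : ℝ} (hp : 0 < p) (hq : 0 < q) :
    IntervalIntegrable (fun s : ℝ => s ^ (p - 1) * (1 - s) ^ (q - 1)) volume 0 1 := by
  have hB := Complex.betaIntegral_convergent (u := p) (v := q) (by simpa) (by simpa)
  rw [intervalIntegrable_iff_integrableOn_Icc_of_le zero_le_one] at hB ⊢
  refine IntegrableOn.congr_fun (Integrable.re hB) (fun s hs => ?_) measurableSet_Icc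
  simp only [ofReal_betaIntegrand hs, RCLike.re_to_complex, Complex.ofReal_re]

lemma integral_rpow_mul_one_sub_rpow {p q : ℝ} (hp : 0 < p) (hq : 0 < q) :
    ∫ s in (0:ℝ)..1, s ^ (p - 1) * (1 - s) ^ (q - 1) = ProbabilityTheory.beta p q := by
  have hB := Complex.betaIntegral_convergent (u := p) (v := q) (by simpa) (by simpa)
  rw [ProbabilityTheory.beta_eq_betaIntegralReal p q hp hq, Complex.betaIntegral,
    ← RCLike.re_to_complex, ← intervalIntegral_re hB]
  refine integral_congr (fun s hs => ?_)
  rw [uIcc_of_le zero_le_one] at hs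
  simp only [ofReal_betaIntegrand hs, RCLike.re_to_complex, Complex.ofReal_re]

section

variable {t α k : ℝ}

lemma image_exp_log_mul_Ioo (ht : 1 < t) : (fun u => exp (log t * u)) '' Ioo 0 1 = Ioo 1 t := by
  have hT : 0 < log t := log_pos ht
  ext s
  constructor
  · rintro ⟨u, ⟨hu0, hu1⟩, rfl⟩
    refine ⟨one_lt_exp_iff.mpr (mul_pos hT hu0), ?_⟩
    calc exp (log t * u) < exp (log t) := exp_lt_exp.mpr (mul_lt_of_lt_one_right hT hu1)
      _ = t := exp_log (by linarith)
  · rintro ⟨hs1, hst⟩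
    have hs0 : 0 < s := by linarith
    refine ⟨log s / log t, ⟨div_pos (log_pos hs1) hT, ?_⟩, ?_⟩
    · exact (div_lt_one hT).mpr (log_lt_log hs0 hst)
    · simp only [mul_div_cancel₀ _ hT.ne', exp_log hs0]

lemma hasDerivWithinAt_exp_log_mul (u : ℝ) (s : Set ℝ) :
    HasDerivWithinAt (fun u => exp (log t * u)) (log t * exp (log t * u)) s u := by
  simpa [mul_comm] using ((hasDerivAt_id u).const_mul (log t)).exp.hasDerivWithinAt

lemma injOn_exp_log_mul (ht : 1 < t) : InjOn (fun u => exp (log t * u)) (Ioo 0 1) :=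
  fun _ _ _ _ h => mul_left_cancel₀ (log_pos ht).ne' (exp_injective h)

lemma eqOn_log_div_rpow_mul_log_rpow_comp_exp (ht : 1 < t) :
    EqOn (fun u => |log t * exp (log t * u)| •
        (log (t / exp (log t * u)) ^ (α - 1) * log (exp (log t * u)) ^ k / exp (log t * u)))
      (fun u => log t ^ (α + k) * (u ^ (k + 1 - 1) * (1 - u) ^ (α - 1))) (Ioo 0 1) := by
  intro u ⟨hu0, hu1⟩
  have hT : 0 < log t := log_pos ht
  have hlog : log (t / exp (log t * u)) = log t * (1 - u) := by
    rw [log_div (by linarith) (exp_pos _).ne', log_exp]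
    ring
  simp only [smul_eq_mul, hlog, log_exp, abs_of_pos (mul_pos hT (exp_pos _)),
    mul_rpow hT.le (sub_nonneg.mpr hu1.le), mul_rpow hT.le hu0.le, add_sub_cancel_right]
  rw [show α + k = (α - 1) + k + 1 by ring, rpow_add_one hT.ne', rpow_add hT]
  field_simp

lemma intervalIntegrable_log_div_rpow_mul_log_rpow (ht : 1 < t) (hα : 0 < α) (hk : 0 < k + 1) :
    IntervalIntegrable (fun s => log (t / s) ^ (α - 1) * log s ^ k / s) volume 1 t := by
  rw [intervalIntegrable_iff_integrableOn_Ioo_of_le ht.le, ← image_exp_log_mul_Ioo ht,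
    integrableOn_image_iff_integrableOn_abs_deriv_smul measurableSet_Ioo
      (fun u _ => hasDerivWithinAt_exp_log_mul u _) (injOn_exp_log_mul ht)]
  have hB := ((intervalIntegrable_rpow_mul_one_sub_rpow hk hα).const_mul (log t ^ (α + k)))
  rw [intervalIntegrable_iff_integrableOn_Ioo_of_le zero_le_one] at hB
  exact hB.congr_fun (eqOn_log_div_rpow_mul_log_rpow_comp_exp ht).symm measurableSet_Ioo

lemma integral_log_div_rpow_mul_log_rpow (ht : 1 < t) (hα : 0 < α) (hk : 0 < k + 1) :
    ∫ s in (1:ℝ)..t, log (t / s) ^ (α - 1) * log s ^ k / s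
      = log t ^ (α + k) * ProbabilityTheory.beta (k + 1) α := by
  rw [integral_of_le ht.le, integral_Ioc_eq_integral_Ioo, ← image_exp_log_mul_Ioo ht,
    integral_image_eq_integral_abs_deriv_smul measurableSet_Ioo
      (fun u _ => hasDerivWithinAt_exp_log_mul u _) (injOn_exp_log_mul ht),
    setIntegral_congr_fun measurableSet_Ioo (eqOn_log_div_rpow_mul_log_rpow_comp_exp ht),
    ← integral_Ioc_eq_integral_Ioo, ← integral_of_le zero_le_one, intervalIntegral.integral_const_mul,
    integral_rpow_mul_one_sub_rpow hk hα]

end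

lemma abs_integral_log_div_rpow_mul_div_le {t α k M : ℝ} {φ : ℝ → ℝ} (ht : 1 < t) (hα : 0 < α)
    (hk : 0 < k + 1) (hφ : ∀ s ∈ Ioc 1 t, |φ s| ≤ M * log s ^ k) :
    |∫ s in (1:ℝ)..t, log (t / s) ^ (α - 1) * φ s / s|
      ≤ M * (log t ^ (α + k) * ProbabilityTheory.beta (k + 1) α) := by
  have hpointwise : ∀ s ∈ Ioc 1 t, ‖log (t / s) ^ (α - 1) * φ s / s‖
      ≤ M * (log (t / s) ^ (α - 1) * log s ^ k / s) := by
    intro s ⟨hs1, hst⟩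
    have hs0 : 0 < s := by linarith
    have hkernel : 0 ≤ log (t / s) ^ (α - 1) :=
      rpow_nonneg (log_nonneg ((one_le_div hs0).mpr hst)) _
    rw [norm_eq_abs, abs_div, abs_mul, abs_of_nonneg hkernel, abs_of_pos hs0, mul_div_assoc',
      mul_left_comm]
    gcongr
    exact hφ s ⟨hs1, hst⟩
  calc |∫ s in (1:ℝ)..t, log (t / s) ^ (α - 1) * φ s / s|
      ≤ ∫ s in (1:ℝ)..t, M * (log (t / s) ^ (α - 1) * log s ^ k / s) :=
        norm_integral_le_of_norm_le ht.le (ae_of_all _ hpointwise)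
          ((intervalIntegrable_log_div_rpow_mul_log_rpow ht hα hk).const_mul M)
    _ = M * (log t ^ (α + k) * ProbabilityTheory.beta (k + 1) α) := by
        rw [intervalIntegral.integral_const_mul, integral_log_div_rpow_mul_log_rpow ht hα hk]

theorem integral_bound_of_H1_general (α β γ x₀ h b M k : ℝ) (f : ℝ → ℝ → ℝ)
    (hα0 : 0 < α) (hα1 : α < 1) (hβ0 : 0 ≤ β)
    (hk : β * (1 - α) - 1 < k)
    (H1bdd : ∀ t ∈ Set.Ioc (1:ℝ) (1 + h), ∀ x ∈ Set.Icc (x₀ - b) (x₀ + b),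
      |f t (Real.log t ^ (γ - 1) * x)| ≤ M * Real.log t ^ k)
    (l : ℝ) (hlh : l ≤ h)
    (x : ℝ → ℝ)
    (hxb : ∀ t ∈ Set.Ioc (1:ℝ) (1 + l), |Real.log t ^ (1 - γ) * x t - x₀| ≤ b) :
    ∀ t ∈ Set.Ioc (1:ℝ) (1 + l),
      |(1 / Real.Gamma α) * ∫ s in (1:ℝ)..t, Real.log (t / s) ^ (α - 1) * f s (x s) / s|
        ≤ M * Real.log t ^ (α + k) * (Real.Gamma (k + 1) / Real.Gamma (α + k + 1)) := by
  intro t ⟨ht1, htl⟩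
  have hk1 : 0 < k + 1 := by nlinarith [mul_nonneg hβ0 (sub_nonneg.mpr hα1.le)]
  have hfx : ∀ s ∈ Ioc 1 t, |f s (x s)| ≤ M * log s ^ k := by
    intro s ⟨hs1, hst⟩
    have hxs := abs_le.mp (hxb s ⟨hs1, hst.trans htl⟩)
    have hbdd := H1bdd s ⟨hs1, by linarith⟩ (log s ^ (1 - γ) * x s)
      ⟨by linarith [hxs.1], by linarith [hxs.2]⟩
    rwa [← mul_assoc, ← rpow_add (log_pos hs1), show γ - 1 + (1 - γ) = 0 by ring, rpow_zero,
      one_mul] at hbdd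
  have hΓ : 0 < Gamma α := Gamma_pos_of_pos hα0
  rw [abs_mul, abs_of_pos (one_div_pos.mpr hΓ)]
  calc 1 / Gamma α * |∫ s in (1:ℝ)..t, log (t / s) ^ (α - 1) * f s (x s) / s|
      ≤ 1 / Gamma α * (M * (log t ^ (α + k) * ProbabilityTheory.beta (k + 1) α)) := by
        gcongr
        exact abs_integral_log_div_rpow_mul_div_le ht1 hα0 hk1 hfx
    _ = M * log t ^ (α + k) * (Gamma (k + 1) / Gamma (α + k + 1)) := by
        rw [ProbabilityTheory.beta, show k + 1 + α = α + k + 1 by ring]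
        field_simp

theorem integral_bound_of_H1 (α β γ x₀ h b M k : ℝ) (f : ℝ → ℝ → ℝ)
    (hα0 : 0 < α) (hα1 : α < 1) (hβ0 : 0 ≤ β) (hβ1 : β ≤ 1)
    (hγ : γ = α + β * (1 - α))
    (hh : 0 < h) (hb : 0 < b) (hM : 0 ≤ M) (hk : β * (1 - α) - 1 < k)
    (H1cont : ∀ t ∈ Set.Ioc (1:ℝ) (1 + h),
      ContinuousOn (fun x : ℝ => f t (Real.log t ^ (γ - 1) * x)) (Set.Icc (x₀ - b) (x₀ + b)))
    (H1meas : ∀ x ∈ Set.Icc (x₀ - b) (x₀ + b),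
      AEMeasurable (fun t : ℝ => f t (Real.log t ^ (γ - 1) * x))
        (MeasureTheory.volume.restrict (Set.Ioc (1:ℝ) (1 + h))))
    (H1bdd : ∀ t ∈ Set.Ioc (1:ℝ) (1 + h), ∀ x ∈ Set.Icc (x₀ - b) (x₀ + b),
      |f t (Real.log t ^ (γ - 1) * x)| ≤ M * Real.log t ^ k)
    (l : ℝ) (hl0 : 0 < l) (hlh : l ≤ h)
    (x : ℝ → ℝ) (hxc : ContinuousOn x (Set.Ioc 1 (1 + l)))
    (hxb : ∀ t ∈ Set.Ioc (1:ℝ) (1 + l), |Real.log t ^ (1 - γ) * x t - x₀| ≤ b) :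
    ∀ t ∈ Set.Ioc (1:ℝ) (1 + l),
      |(1 / Real.Gamma α) * ∫ s in (1:ℝ)..t, Real.log (t / s) ^ (α - 1) * f s (x s) / s|
        ≤ M * Real.log t ^ (α + k) * (Real.Gamma (k + 1) / Real.Gamma (α + k + 1)) :=
  integral_bound_of_H1_general α β γ x₀ h b M k f hα0 hα1 hβ0 hk H1bdd l hlh x hxb
end

section
/- Assume (H1) and let 0 < l ≤ h. If x : (1,1+l] → ℝ is continuous and satisfies |(log t)^{1-γ} x(t) - x₀| ≤ b for all t ∈ (1,1+l], then lim_{t→1⁺} (log t)^{1-γ} · (1/Γ(α)) ∫₁ᵗ (log(t/s))^{α-1} f(s, x(s)) ds/s = 0. -/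
open Real MeasureTheory intervalIntegral Set Filter

/-! Bounding `|f (s, x s)|` by `M (log s)^k`, the substitution `s = t^v` turns the Hadamard
integral of `(log s)^k` into `(log t)^(α + k)` times the Beta integral `B(α, k + 1)`, which is
finite because `k > -1`. So the expression is `O((log t)^(α + k + 1 - γ))`, and the exponent is
positive exactly by the hypothesis on `k`. -/

lemma integrableOn_one_sub_rpow_mul_rpow {p q : ℝ} (hp : -1 < p) (hq : -1 < q) :
    IntegrableOn (fun v : ℝ => (1 - v) ^ p * v ^ q) (Ioo 0 1) := by
  have h := (Complex.betaIntegral_convergent (u := (q : ℂ) + 1) (v := (p : ℂ) + 1)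
      (by simp; linarith) (by simp; linarith)).norm
  rw [intervalIntegrable_iff_integrableOn_Ioo_of_le zero_le_one] at h
  refine h.congr_fun (fun v ⟨hv0, hv1⟩ => ?_) measurableSet_Ioo
  have hv1' : (0:ℝ) < 1 - v := by linarith
  simp only [add_sub_cancel_right]
  rw [norm_mul, Complex.norm_cpow_eq_rpow_re_of_pos hv0, Complex.ofReal_re,
    show (1 - (v:ℂ)) = ((1 - v : ℝ) : ℂ) by push_cast; ring,
    Complex.norm_cpow_eq_rpow_re_of_pos hv1', Complex.ofReal_re, mul_comm]

section LogSubstitution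

variable {t : ℝ}

lemma image_exp_mul_log_Ioo (ht : 1 < t) :
    (fun v => exp (v * log t)) '' Ioo 0 1 = Ioo 1 t := by
  rw [← image_image exp (· * log t), image_mul_right_Ioo _ _ (log_pos ht), image_exp_Ioo,
    zero_mul, one_mul, exp_zero, exp_log (by linarith)]

lemma hasDerivAt_exp_mul_log (v : ℝ) :
    HasDerivAt (fun v => exp (v * log t)) (log t * exp (v * log t)) v := by
  simpa [mul_comm] using ((hasDerivAt_mul_const (log t)).exp : HasDerivAt _ _ v)

lemma injective_exp_mul_log (ht : 1 < t) : Function.Injective fun v => exp (v * log t) :=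
  fun _ _ h => mul_right_cancel₀ (log_pos ht).ne' (exp_injective h)

theorem integral_Ioo_one_eq_integral_comp_exp_mul_log (ht : 1 < t) (g : ℝ → ℝ) :
    ∫ s in Ioo 1 t, g s =
      ∫ v in Ioo 0 1, (log t * exp (v * log t)) * g (exp (v * log t)) := by
  rw [← image_exp_mul_log_Ioo ht, integral_image_eq_integral_abs_deriv_smul measurableSet_Ioo
    (fun v _ => (hasDerivAt_exp_mul_log v).hasDerivWithinAt)
    (injective_exp_mul_log ht).injOn]
  simp only [abs_of_pos (mul_pos (log_pos ht) (exp_pos _)), smul_eq_mul]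

theorem integrableOn_Ioo_one_iff_comp_exp_mul_log (ht : 1 < t) (g : ℝ → ℝ) :
    IntegrableOn g (Ioo 1 t) ↔
      IntegrableOn (fun v => (log t * exp (v * log t)) * g (exp (v * log t))) (Ioo 0 1) := by
  rw [← image_exp_mul_log_Ioo ht, integrableOn_image_iff_integrableOn_abs_deriv_smul
    measurableSet_Ioo (fun v _ => (hasDerivAt_exp_mul_log v).hasDerivWithinAt)
    (injective_exp_mul_log ht).injOn]
  simp only [abs_of_pos (mul_pos (log_pos ht) (exp_pos _)), smul_eq_mul]

end LogSubstitution

section HadamardKernel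

variable {t p q : ℝ}

lemma log_div_rpow_mul_log_rpow_div_comp_exp_mul_log (ht : 1 < t) {v : ℝ} (hv : v ∈ Ioo 0 1) :
    (log t * exp (v * log t)) *
        (log (t / exp (v * log t)) ^ p * log (exp (v * log t)) ^ q / exp (v * log t)) =
      log t ^ (p + q + 1) * ((1 - v) ^ p * v ^ q) := by
  have hτ := log_pos ht
  have hlog : log (t / exp (v * log t)) = (1 - v) * log t := by
    rw [log_div (by linarith) (exp_ne_zero _), log_exp]; ring
  rw [hlog, log_exp, mul_rpow (by linarith [hv.2]) hτ.le, mul_rpow hv.1.le hτ.le,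
    rpow_add hτ, rpow_add hτ, rpow_one]
  field_simp

theorem integrableOn_log_div_rpow_mul_log_rpow_div (ht : 1 < t) (hp : -1 < p) (hq : -1 < q) :
    IntegrableOn (fun s => log (t / s) ^ p * log s ^ q / s) (Ioo 1 t) := by
  rw [integrableOn_Ioo_one_iff_comp_exp_mul_log ht]
  exact IntegrableOn.congr_fun ((integrableOn_one_sub_rpow_mul_rpow hp hq).const_mul _)
    (fun v hv => (log_div_rpow_mul_log_rpow_div_comp_exp_mul_log ht hv).symm) measurableSet_Ioo

theorem integral_log_div_rpow_mul_log_rpow_div (ht : 1 < t) :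
    ∫ s in Ioo 1 t, log (t / s) ^ p * log s ^ q / s =
      log t ^ (p + q + 1) * ∫ v in Ioo 0 1, (1 - v) ^ p * v ^ q := by
  rw [integral_Ioo_one_eq_integral_comp_exp_mul_log ht, ← MeasureTheory.integral_const_mul]
  exact setIntegral_congr_fun measurableSet_Ioo
    (fun v hv => log_div_rpow_mul_log_rpow_div_comp_exp_mul_log ht hv)

theorem norm_integral_log_div_rpow_mul_div_le (ht : 1 < t) (hp : -1 < p) (hq : -1 < q)
    {g : ℝ → ℝ} {C : ℝ} (hg : ∀ s ∈ Ioc 1 t, ‖g s‖ ≤ C * log s ^ q) :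
    ‖∫ s in 1..t, log (t / s) ^ p * g s / s‖ ≤
      C * (∫ v in Ioo 0 1, (1 - v) ^ p * v ^ q) * log t ^ (p + q + 1) := by
  have hpointwise : ∀ s ∈ Ioc 1 t,
      ‖log (t / s) ^ p * g s / s‖ ≤ C * (log (t / s) ^ p * log s ^ q / s) := by
    rintro s ⟨hs1, hst⟩
    have hs0 : 0 < s := by linarith
    have hkernel : 0 ≤ log (t / s) ^ p :=
      rpow_nonneg (log_nonneg ((one_le_div hs0).mpr hst)) _
    rw [norm_div, norm_mul, norm_of_nonneg hkernel, norm_of_nonneg hs0.le, mul_div_assoc',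
      mul_left_comm]
    gcongr
    exact hg s ⟨hs1, hst⟩
  have hintegrable :
      IntervalIntegrable (fun s => C * (log (t / s) ^ p * log s ^ q / s)) volume 1 t :=
    ((intervalIntegrable_iff_integrableOn_Ioo_of_le ht.le).mpr
      (integrableOn_log_div_rpow_mul_log_rpow_div ht hp hq)).const_mul C
  refine (norm_integral_le_of_norm_le ht.le (ae_of_all _ hpointwise) hintegrable).trans_eq ?_
  rw [intervalIntegral.integral_const_mul, integral_of_le ht.le, integral_Ioc_eq_integral_Ioo,
    integral_log_div_rpow_mul_log_rpow_div ht]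
  ring

theorem norm_log_rpow_mul_const_mul_integral_le (ht : 1 < t) (hp : -1 < p) (hq : -1 < q)
    (r c : ℝ) {g : ℝ → ℝ} {C : ℝ} (hg : ∀ s ∈ Ioc 1 t, ‖g s‖ ≤ C * log s ^ q) :
    ‖log t ^ r * (c * ∫ s in 1..t, log (t / s) ^ p * g s / s)‖ ≤
      |c| * (C * ∫ v in Ioo 0 1, (1 - v) ^ p * v ^ q) * log t ^ (r + (p + q + 1)) := by
  have hτ := log_pos ht
  calc _ = log t ^ r * (|c| * ‖∫ s in 1..t, log (t / s) ^ p * g s / s‖) := by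
        rw [norm_mul, norm_mul, norm_of_nonneg (rpow_nonneg hτ.le _), Real.norm_eq_abs]
    _ ≤ log t ^ r * (|c| * (C * (∫ v in Ioo 0 1, (1 - v) ^ p * v ^ q) *
          log t ^ (p + q + 1))) := by
        gcongr
        exact norm_integral_log_div_rpow_mul_div_le ht hp hq hg
    _ = _ := by
        rw [rpow_add hτ r]
        ring

end HadamardKernel

lemma tendsto_const_mul_log_rpow_nhdsGT_one (c : ℝ) {ε : ℝ} (hε : 0 < ε) :
    Tendsto (fun t => c * log t ^ ε) (nhdsWithin 1 (Ioi 1)) (nhds 0) := by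
  have hlog : Tendsto log (nhdsWithin 1 (Ioi 1)) (nhds 0) := by
    simpa using ((continuousAt_log one_ne_zero).tendsto).mono_left nhdsWithin_le_nhds
  simpa [Function.comp_def, zero_rpow hε.ne'] using
    (((continuousAt_rpow_const 0 ε (Or.inr hε.le)).tendsto).comp hlog).const_mul c

theorem weighted_integral_tendsto_zero_general (α β γ x₀ h b M k : ℝ) (f : ℝ → ℝ → ℝ)
    (hα0 : 0 < α) (hα1 : α < 1) (hβ0 : 0 ≤ β)
    (hγ : γ = α + β * (1 - α))
    (hk : β * (1 - α) - 1 < k)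
    (H1bdd : ∀ t ∈ Set.Ioc (1:ℝ) (1 + h), ∀ x ∈ Set.Icc (x₀ - b) (x₀ + b),
      |f t (Real.log t ^ (γ - 1) * x)| ≤ M * Real.log t ^ k)
    (l : ℝ) (hl0 : 0 < l) (hlh : l ≤ h)
    (x : ℝ → ℝ)
    (hxb : ∀ t ∈ Set.Ioc (1:ℝ) (1 + l), |Real.log t ^ (1 - γ) * x t - x₀| ≤ b) :
    Filter.Tendsto
      (fun t : ℝ => Real.log t ^ (1 - γ) *
        ((1 / Real.Gamma α) * ∫ s in (1:ℝ)..t, Real.log (t / s) ^ (α - 1) * f s (x s) / s))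
      (nhdsWithin 1 (Set.Ioi 1)) (nhds 0) := by
  have hk1 : -1 < k := by nlinarith
  have hε : 0 < 1 - γ + (α - 1 + k + 1) := by rw [hγ]; linarith
  have hf : ∀ s ∈ Ioc 1 (1 + l), ‖f s (x s)‖ ≤ M * log s ^ k := by
    intro s hs
    have hdev := abs_sub_le_iff.mp (hxb s hs)
    have hcancel : log s ^ (γ - 1) * (log s ^ (1 - γ) * x s) = x s := by
      rw [← mul_assoc, ← rpow_add (log_pos hs.1), sub_add_sub_cancel', sub_self, rpow_zero,
        one_mul]
    simpa [hcancel] using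
      H1bdd s ⟨hs.1, by linarith [hs.2]⟩ (log s ^ (1 - γ) * x s) ⟨by linarith, by linarith⟩
  have hbound := fun t (ht : t ∈ Ioc 1 (1 + l)) =>
    norm_log_rpow_mul_const_mul_integral_le (p := α - 1) ht.1 (by linarith) hk1 (1 - γ)
      (1 / Gamma α) (fun s hs => hf s ⟨hs.1, hs.2.trans ht.2⟩)
  exact squeeze_zero_norm' (mem_of_superset (Ioc_mem_nhdsGT (by linarith)) hbound)
    (tendsto_const_mul_log_rpow_nhdsGT_one _ hε)

theorem weighted_integral_tendsto_zero (α β γ x₀ h b M k : ℝ) (f : ℝ → ℝ → ℝ)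
    (hα0 : 0 < α) (hα1 : α < 1) (hβ0 : 0 ≤ β) (hβ1 : β ≤ 1)
    (hγ : γ = α + β * (1 - α))
    (hh : 0 < h) (hb : 0 < b) (hM : 0 ≤ M) (hk : β * (1 - α) - 1 < k)
    (H1cont : ∀ t ∈ Set.Ioc (1:ℝ) (1 + h),
      ContinuousOn (fun x : ℝ => f t (Real.log t ^ (γ - 1) * x)) (Set.Icc (x₀ - b) (x₀ + b)))
    (H1meas : ∀ x ∈ Set.Icc (x₀ - b) (x₀ + b),
      AEMeasurable (fun t : ℝ => f t (Real.log t ^ (γ - 1) * x))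
        (MeasureTheory.volume.restrict (Set.Ioc (1:ℝ) (1 + h))))
    (H1bdd : ∀ t ∈ Set.Ioc (1:ℝ) (1 + h), ∀ x ∈ Set.Icc (x₀ - b) (x₀ + b),
      |f t (Real.log t ^ (γ - 1) * x)| ≤ M * Real.log t ^ k)
    (l : ℝ) (hl0 : 0 < l) (hlh : l ≤ h)
    (x : ℝ → ℝ) (hxc : ContinuousOn x (Set.Ioc 1 (1 + l)))
    (hxb : ∀ t ∈ Set.Ioc (1:ℝ) (1 + l), |Real.log t ^ (1 - γ) * x t - x₀| ≤ b) :
    Filter.Tendsto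
      (fun t : ℝ => Real.log t ^ (1 - γ) *
        ((1 / Real.Gamma α) * ∫ s in (1:ℝ)..t, Real.log (t / s) ^ (α - 1) * f s (x s) / s))
      (nhdsWithin 1 (Set.Ioi 1)) (nhds 0) :=
  weighted_integral_tendsto_zero_general α β γ x₀ h b M k f hα0 hα1 hβ0 hγ hk H1bdd l hl0 hlh x hxb
end

section
/- Assume (H1) and let l ∈ (0,h] satisfy M · l^{α+k+1-γ} · Γ(k+1)/Γ(α+k+1) ≤ b. Then for every n ≥ 0 the Picard iterate φₙ is continuous on (1,1+l] and satisfies |(log t)^{1-γ} φₙ(t) - x₀| ≤ b for all t ∈ (1,1+l]. -/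
open Real MeasureTheory intervalIntegral Set Filter

/-- Picard iterates for the Hilfer-Hadamard initial value problem. -/
noncomputable def picard (α γ x₀ : ℝ) (f : ℝ → ℝ → ℝ) : ℕ → ℝ → ℝ
  | 0 => fun t => x₀ * Real.log t ^ (γ - 1)
  | n + 1 => fun t => x₀ * Real.log t ^ (γ - 1) +
      (1 / Real.Gamma α) *
        ∫ s in (1:ℝ)..t, Real.log (t / s) ^ (α - 1) * f s (picard α γ x₀ f n s) / s

open Topology

/-!
In log coordinates `u = log s` the Hadamard integral `∫₁ᵗ (log (t/s))^(α-1) g(s) ds/s` becomes the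
Riemann–Liouville integral `∫₀^L (L - u)^(α-1) g(eᵘ) du` with `L = log t`. When
`|g(s)| ≤ M (log s)^k`, the Beta integral `∫₀^L (L - u)^(α-1) u^k du = Γ(α)Γ(k+1)/Γ(α+k+1) L^(α+k)`
bounds it, and the choice of `l` keeps `(log t)^(1-γ) φₙ(t)` within `b` of `x₀`. Splitting the
same integral at the smaller of two endpoints shows that it is continuous in `L`. Finally
`s ↦ f(s, φₙ(s))` is measurable because `f` is a Carathéodory function of the weighted state and
`φₙ` is continuous, so the induction on `n` goes through.
-/

theorem tendsto_ceil_mul_div_atTop (y : ℝ) :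
    Tendsto (fun m : ℕ => (⌈((m : ℝ) + 1) * y⌉ : ℝ) / ((m : ℝ) + 1)) atTop (𝓝 y) := by
  have hupper : Tendsto (fun m : ℕ => y + 1 / ((m : ℝ) + 1)) atTop (𝓝 y) := by
    simpa using tendsto_const_nhds.add (tendsto_one_div_add_atTop_nhds_zero_nat (𝕜 := ℝ))
  refine tendsto_of_tendsto_of_tendsto_of_le_of_le tendsto_const_nhds hupper (fun m => ?_)
    (fun m => ?_)
  · rw [le_div_iff₀ (by positivity), mul_comm]
    exact Int.le_ceil _
  · rw [div_le_iff₀ (by positivity)]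
    have := Int.ceil_lt_add_one (((m : ℝ) + 1) * y)
    field_simp
    linarith

theorem aemeasurable_comp_of_countable {α ι : Type*} [MeasurableSpace α] [Countable ι]
    [MeasurableSpace ι] [MeasurableSingletonClass ι] {μ : Measure α} {F : α → ι → ℝ}
    (hF : ∀ i, AEMeasurable (fun t => F t i) μ) {n : α → ι} (hn : Measurable n) :
    AEMeasurable (fun t => F t (n t)) μ := by
  refine ⟨fun t => (hF (n t)).mk _ t,
    (measurable_from_prod_countable_left (f := fun p : α × ι => (hF p.2).mk _ p.1)
      fun i => (hF i).measurable_mk).comp (measurable_id.prodMk hn), ?_⟩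
  filter_upwards [ae_all_iff.2 fun i => (hF i).ae_eq_mk] with t ht using ht (n t)

theorem aemeasurable_comp_of_continuousOn {α : Type*} [MeasurableSpace α] {μ : Measure α}
    {F : α → ℝ → ℝ} {c d : ℝ} (hcd : c ≤ d)
    (hcont : ∀ᵐ t ∂μ, ContinuousOn (F t) (Icc c d))
    (hmeas : ∀ y ∈ Icc c d, AEMeasurable (fun t => F t y) μ)
    {x : α → ℝ} (hx : AEMeasurable x μ) (hxK : ∀ᵐ t ∂μ, x t ∈ Icc c d) :
    AEMeasurable (fun t => F t (x t)) μ := by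
  let grid (m : ℕ) (i : ℤ) : ℝ := projIcc c d hcd ((i : ℝ) / ((m : ℝ) + 1))
  have hgrid : ∀ m i, grid m i ∈ Icc c d := fun m i => (projIcc c d hcd _).2
  refine aemeasurable_of_tendsto_metrizable_ae atTop
    (f := fun m t => F t (grid m ⌈((m : ℝ) + 1) * hx.mk x t⌉))
    (fun m => aemeasurable_comp_of_countable (fun i => hmeas _ (hgrid m i))
      (hx.measurable_mk.const_mul _).ceil) ?_
  filter_upwards [hcont, hxK, hx.ae_eq_mk] with t hFt hxt hmk
  rw [← hmk]
  refine (hFt _ hxt).tendsto.comp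
    (tendsto_nhdsWithin_iff.2 ⟨?_, .of_forall fun m => hgrid m _⟩)
  have := (continuous_subtype_val.comp (continuous_projIcc (h := hcd))).tendsto (x t)
    |>.comp (tendsto_ceil_mul_div_atTop (x t))
  simpa [Function.comp_def, projIcc_of_mem hcd hxt] using this

theorem quasiMeasurePreserving_exp : Measure.QuasiMeasurePreserving exp volume volume where
  measurable := measurable_exp
  absolutelyContinuous := by
    refine Measure.AbsolutelyContinuous.mk fun s hs hs0 => ?_
    rw [Measure.map_apply measurable_exp hs]
    refine measure_mono_null (t := log '' (s ∩ Ioi 0))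
      (fun u hu => ⟨exp u, ⟨hu, exp_pos u⟩, log_exp u⟩)
      (addHaar_image_eq_zero_of_differentiableOn_of_addHaar_eq_zero volume
        (differentiableOn_log.mono fun y hy => ne_of_gt hy.2)
        (measure_mono_null inter_subset_left hs0))

theorem AEMeasurable.comp_exp {g : ℝ → ℝ} {a b : ℝ}
    (hg : AEMeasurable g (volume.restrict (Ioc (exp a) (exp b)))) :
    AEMeasurable (fun u => g (exp u)) (volume.restrict (Ioc a b)) :=
  hg.comp_quasiMeasurePreserving
    (quasiMeasurePreserving_exp.restrict fun _ hu => ⟨exp_lt_exp.2 hu.1, exp_le_exp.2 hu.2⟩)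

section RiemannLiouville

noncomputable def riemannLiouville (α : ℝ) (G : ℝ → ℝ) (L : ℝ) : ℝ :=
  1 / Gamma α * ∫ u in (0:ℝ)..L, (L - u) ^ (α - 1) * G u

variable {α k M : ℝ}

theorem intervalIntegrable_sub_rpow_mul_rpow (hα : 0 < α) (hk : -1 < k) {L : ℝ} (hL : 0 < L) :
    IntervalIntegrable (fun u => (L - u) ^ (α - 1) * u ^ k) volume 0 L := by
  refine IntervalIntegrable.trans (b := L / 2) ?_ ?_
  · have hcont : ContinuousOn (fun u : ℝ => (L - u) ^ (α - 1)) (uIcc 0 (L / 2)) := by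
      refine ContinuousOn.rpow_const (by fun_prop) fun u hu => Or.inl ?_
      rw [uIcc_of_le (by linarith)] at hu
      linarith [hu.2]
    simpa only [mul_comm] using (intervalIntegrable_rpow' hk).mul_continuousOn hcont
  · have hker : IntervalIntegrable (fun u : ℝ => (L - u) ^ (α - 1)) volume (L / 2) L := by
      convert (intervalIntegrable_rpow' (r := α - 1) (a := L / 2) (b := 0)
        (by linarith)).comp_sub_left L using 1 <;> ring
    refine hker.mul_continuousOn (ContinuousOn.rpow_const (by fun_prop) fun u hu => Or.inl ?_)
    rw [uIcc_of_le (by linarith)] at hu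
    linarith [hu.1]

theorem integral_sub_rpow_mul_rpow (hα : 0 < α) (hk : -1 < k) {L : ℝ} (hL : 0 < L) :
    ∫ u in (0:ℝ)..L, (L - u) ^ (α - 1) * u ^ k
      = Gamma α * Gamma (k + 1) / Gamma (α + k + 1) * L ^ (α + k) := by
  have hbeta := Complex.betaIntegral_scaled (k + 1 : ℝ) α hL
  rw [Complex.betaIntegral_eq_Gamma_mul_div _ _ (by rw [Complex.ofReal_re]; linarith) (by simpa using hα)] at hbeta
  suffices h : ((∫ u in (0:ℝ)..L, (L - u) ^ (α - 1) * u ^ k : ℝ) : ℂ)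
      = ((Gamma α * Gamma (k + 1) / Gamma (α + k + 1) * L ^ (α + k) : ℝ) : ℂ) from
    mod_cast h
  rw [← intervalIntegral.integral_ofReal]
  calc ∫ u in (0:ℝ)..L, (((L - u) ^ (α - 1) * u ^ k : ℝ) : ℂ)
      = ∫ u in (0:ℝ)..L, (u : ℂ) ^ (((k + 1 : ℝ) : ℂ) - 1) * ((L : ℂ) - u) ^ ((α : ℂ) - 1) := by
        refine integral_congr fun u hu => ?_
        rw [uIcc_of_le hL.le] at hu
        rw [Complex.ofReal_mul, Complex.ofReal_cpow (by linarith [hu.2]),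
          Complex.ofReal_cpow hu.1]
        push_cast
        ring_nf
    _ = _ := by
        rw [hbeta, Complex.ofReal_mul, Complex.ofReal_cpow hL.le]
        push_cast [← Complex.Gamma_ofReal]
        ring_nf

theorem riemannLiouville_rpow (hα : 0 < α) (hk : -1 < k) {L : ℝ} (hL : 0 < L) :
    riemannLiouville α (· ^ k) L = Gamma (k + 1) / Gamma (α + k + 1) * L ^ (α + k) := by
  rw [riemannLiouville, integral_sub_rpow_mul_rpow hα hk hL]
  field_simp [(Gamma_pos_of_pos hα).ne']

theorem abs_sub_rpow_mul_le {G : ℝ → ℝ} {u L : ℝ} (huL : u ≤ L) (hG : |G u| ≤ M * u ^ k) :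
    |(L - u) ^ (α - 1) * G u| ≤ M * ((L - u) ^ (α - 1) * u ^ k) := by
  have hK : 0 ≤ (L - u) ^ (α - 1) := rpow_nonneg (by linarith) _
  rw [abs_mul, abs_of_nonneg hK, mul_left_comm]
  exact mul_le_mul_of_nonneg_left hG hK

theorem abs_integral_sub_rpow_mul_le {G : ℝ → ℝ} {a b L : ℝ} (hab : a ≤ b) (hbL : b ≤ L)
    (hG : ∀ u ∈ Ioc a b, |G u| ≤ M * u ^ k)
    (hint : IntervalIntegrable (fun u => (L - u) ^ (α - 1) * u ^ k) volume a b) :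
    |∫ u in a..b, (L - u) ^ (α - 1) * G u| ≤ M * ∫ u in a..b, (L - u) ^ (α - 1) * u ^ k := by
  rw [← intervalIntegral.integral_const_mul, ← Real.norm_eq_abs]
  exact norm_integral_le_of_norm_le hab
    (ae_of_all _ fun u hu => abs_sub_rpow_mul_le (hu.2.trans hbL) (hG u hu)) (hint.const_mul M)

theorem intervalIntegrable_sub_rpow_mul (hα : 0 < α) (hk : -1 < k) {G : ℝ → ℝ} {L : ℝ}
    (hL : 0 < L) (hGm : AEStronglyMeasurable G (volume.restrict (Ioc 0 L)))
    (hG : ∀ u ∈ Ioc 0 L, |G u| ≤ M * u ^ k) :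
    IntervalIntegrable (fun u => (L - u) ^ (α - 1) * G u) volume 0 L := by
  rw [intervalIntegrable_iff_integrableOn_Ioc_of_le hL.le]
  have hbound := ((intervalIntegrable_iff_integrableOn_Ioc_of_le hL.le).1
    (intervalIntegrable_sub_rpow_mul_rpow hα hk hL)).const_mul M
  refine hbound.mono' ((by fun_prop : Measurable fun u : ℝ => (L - u) ^ (α - 1))
    |>.aestronglyMeasurable.mul hGm) ((ae_restrict_iff' measurableSet_Ioc).2 ?_)
  exact ae_of_all _ fun u hu => abs_sub_rpow_mul_le hu.2 (hG u hu)

theorem abs_riemannLiouville_le (hα : 0 < α) (hk : -1 < k) {G : ℝ → ℝ} {L : ℝ} (hL : 0 < L)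
    (hG : ∀ u ∈ Ioc 0 L, |G u| ≤ M * u ^ k) :
    |riemannLiouville α G L| ≤ M * riemannLiouville α (· ^ k) L := by
  have hΓ : 0 < 1 / Gamma α := one_div_pos.2 (Gamma_pos_of_pos hα)
  rw [riemannLiouville, riemannLiouville, abs_mul, abs_of_pos hΓ, mul_left_comm]
  exact mul_le_mul_of_nonneg_left (abs_integral_sub_rpow_mul_le hL.le le_rfl hG
    (intervalIntegrable_sub_rpow_mul_rpow hα hk hL)) hΓ.le

theorem integral_sub_rpow (hα : 0 < α) (L₁ L₂ : ℝ) :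
    ∫ u in L₁..L₂, (L₂ - u) ^ (α - 1) = (L₂ - L₁) ^ α / α := by
  rw [intervalIntegral.integral_comp_sub_left (fun u => u ^ (α - 1)),
    integral_rpow (Or.inl (by linarith)), sub_self, sub_add_cancel, zero_rpow hα.ne', sub_zero]

theorem abs_integral_sub_rpow_mul_le_of_abs_le (hα : 0 < α) {G : ℝ → ℝ} {C L₁ L₂ : ℝ}
    (h12 : L₁ ≤ L₂) (hG : ∀ u ∈ Ioc L₁ L₂, |G u| ≤ C) :
    |∫ u in L₁..L₂, (L₂ - u) ^ (α - 1) * G u| ≤ C * ((L₂ - L₁) ^ α / α) := by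
  have hint : IntervalIntegrable (fun u : ℝ => (L₂ - u) ^ (α - 1)) volume L₁ L₂ := by
    convert (intervalIntegrable_rpow' (r := α - 1) (a := L₂ - L₁) (b := 0)
      (by linarith)).comp_sub_left L₂ using 1 <;> ring
  rw [← integral_sub_rpow hα, ← intervalIntegral.integral_const_mul, ← Real.norm_eq_abs]
  refine norm_integral_le_of_norm_le h12 (ae_of_all _ fun u hu => ?_) (hint.const_mul C)
  have hK : 0 ≤ (L₂ - u) ^ (α - 1) := rpow_nonneg (by linarith [hu.2]) _
  rw [norm_mul, Real.norm_of_nonneg hK, Real.norm_eq_abs, mul_comm C]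
  exact mul_le_mul_of_nonneg_left (hG u hu) hK

theorem abs_integral_sub_rpow_mul_sub_le (hα : 0 < α) (hα1 : α ≤ 1) (hk : -1 < k)
    {G : ℝ → ℝ} {L₁ L₂ : ℝ} (hL₁ : 0 < L₁) (h12 : L₁ ≤ L₂)
    (hGm : AEStronglyMeasurable G (volume.restrict (Ioc 0 L₂)))
    (hG : ∀ u ∈ Ioc 0 L₂, |G u| ≤ M * u ^ k) :
    |(∫ u in 0..L₂, (L₂ - u) ^ (α - 1) * G u) - ∫ u in 0..L₁, (L₁ - u) ^ (α - 1) * G u|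
      ≤ M * ((∫ u in 0..L₁, (L₁ - u) ^ (α - 1) * u ^ k)
          - (∫ u in 0..L₂, (L₂ - u) ^ (α - 1) * u ^ k)
          + 2 * ∫ u in L₁..L₂, (L₂ - u) ^ (α - 1) * u ^ k) := by
  have hL₂ : 0 < L₂ := hL₁.trans_le h12
  have hI₂ := intervalIntegrable_sub_rpow_mul hα hk hL₂ hGm hG
  have hI₁ := intervalIntegrable_sub_rpow_mul hα hk hL₁
    (hGm.mono_measure (Measure.restrict_mono (Ioc_subset_Ioc_right h12) le_rfl))
    (fun u hu => hG u ⟨hu.1, hu.2.trans h12⟩)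
  have hP₂ := intervalIntegrable_sub_rpow_mul_rpow hα hk hL₂
  have hP₁ := intervalIntegrable_sub_rpow_mul_rpow hα hk hL₁
  have hleft : uIcc 0 L₁ ⊆ uIcc 0 L₂ := by
    rw [uIcc_of_le hL₁.le, uIcc_of_le hL₂.le]; exact Icc_subset_Icc_right h12
  have hright : uIcc L₁ L₂ ⊆ uIcc 0 L₂ := by
    rw [uIcc_of_le h12, uIcc_of_le hL₂.le]; exact Icc_subset_Icc_left hL₁.le
  have hkernel : |(∫ u in 0..L₁, (L₂ - u) ^ (α - 1) * G u) - ∫ u in 0..L₁, (L₁ - u) ^ (α - 1) * G u|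
      ≤ M * ((∫ u in 0..L₁, (L₁ - u) ^ (α - 1) * u ^ k)
          - ∫ u in 0..L₁, (L₂ - u) ^ (α - 1) * u ^ k) := by
    rw [← intervalIntegral.integral_sub (hI₂.mono_set hleft) hI₁,
      ← intervalIntegral.integral_sub hP₁ (hP₂.mono_set hleft),
      ← intervalIntegral.integral_const_mul, ← Real.norm_eq_abs]
    refine norm_integral_le_of_norm_le hL₁.le ?_ ((hP₁.sub (hP₂.mono_set hleft)).const_mul M)
    -- at `u = L₁` the kernel `(L₁ - u) ^ (α - 1)` takes the junk value `0 ^ (α - 1) = 0`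
    filter_upwards [volume.ae_ne L₁] with u hne hu
    have hK : (L₂ - u) ^ (α - 1) ≤ (L₁ - u) ^ (α - 1) :=
      rpow_le_rpow_of_nonpos (by linarith [lt_of_le_of_ne hu.2 hne]) (by linarith)
        (by linarith)
    calc ‖(L₂ - u) ^ (α - 1) * G u - (L₁ - u) ^ (α - 1) * G u‖
        = ((L₁ - u) ^ (α - 1) - (L₂ - u) ^ (α - 1)) * |G u| := by
          rw [← sub_mul, norm_mul, Real.norm_eq_abs, Real.norm_eq_abs, abs_sub_comm,
            abs_of_nonneg (sub_nonneg.2 hK)]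
      _ ≤ ((L₁ - u) ^ (α - 1) - (L₂ - u) ^ (α - 1)) * (M * u ^ k) :=
          mul_le_mul_of_nonneg_left (hG u ⟨hu.1, hu.2.trans h12⟩) (sub_nonneg.2 hK)
      _ = M * ((L₁ - u) ^ (α - 1) * u ^ k - (L₂ - u) ^ (α - 1) * u ^ k) := by ring
  have htail := abs_integral_sub_rpow_mul_le h12 le_rfl
    (fun u hu => hG u ⟨hL₁.trans hu.1, hu.2⟩) (hP₂.mono_set hright)
  rw [← integral_add_adjacent_intervals (hI₂.mono_set hleft) (hI₂.mono_set hright),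
    ← integral_add_adjacent_intervals (hP₂.mono_set hleft) (hP₂.mono_set hright)]
  have := abs_add_le ((∫ u in 0..L₁, (L₂ - u) ^ (α - 1) * G u)
    - ∫ u in 0..L₁, (L₁ - u) ^ (α - 1) * G u) (∫ u in L₁..L₂, (L₂ - u) ^ (α - 1) * G u)
  rw [sub_add_eq_add_sub] at this
  linarith

theorem abs_integral_sub_rpow_mul_sub_le_of_abs_rpow_le (hα : 0 < α) (hα1 : α ≤ 1)
    (hk : -1 < k) (hM : 0 ≤ M) {G : ℝ → ℝ} {C L₁ L₂ : ℝ} (hL₁ : 0 < L₁) (h12 : L₁ ≤ L₂)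
    (hGm : AEStronglyMeasurable G (volume.restrict (Ioc 0 L₂)))
    (hG : ∀ u ∈ Ioc 0 L₂, |G u| ≤ M * u ^ k) (hC : ∀ u ∈ Ioc L₁ L₂, |u ^ k| ≤ C) :
    |(∫ u in 0..L₂, (L₂ - u) ^ (α - 1) * G u) - ∫ u in 0..L₁, (L₁ - u) ^ (α - 1) * G u|
      ≤ M * (Gamma α * Gamma (k + 1) / Gamma (α + k + 1) * L₁ ^ (α + k)
          - Gamma α * Gamma (k + 1) / Gamma (α + k + 1) * L₂ ^ (α + k)
          + 2 * (C * ((L₂ - L₁) ^ α / α))) := by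
  refine (abs_integral_sub_rpow_mul_sub_le hα hα1 hk hL₁ h12 hGm hG).trans ?_
  rw [integral_sub_rpow_mul_rpow hα hk hL₁, integral_sub_rpow_mul_rpow hα hk (hL₁.trans_le h12)]
  gcongr
  exact (le_abs_self _).trans (abs_integral_sub_rpow_mul_le_of_abs_le hα h12 hC)

theorem continuousOn_integral_sub_rpow_mul (hα : 0 < α) (hα1 : α ≤ 1) (hk : -1 < k)
    (hM : 0 ≤ M) {G : ℝ → ℝ} {L₀ : ℝ} (hGm : AEStronglyMeasurable G (volume.restrict (Ioc 0 L₀)))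
    (hG : ∀ u ∈ Ioc 0 L₀, |G u| ≤ M * u ^ k) :
    ContinuousOn (fun L => ∫ u in 0..L, (L - u) ^ (α - 1) * G u) (Ioc 0 L₀) := by
  intro p hp
  set B := Gamma α * Gamma (k + 1) / Gamma (α + k + 1)
  have hp2 : 0 < p / 2 := by linarith [hp.1]
  obtain ⟨C, hC⟩ := isCompact_Icc.exists_bound_of_continuousOn (s := Icc (p / 2) L₀)
    (continuousOn_id.rpow_const (p := k) fun u hu => Or.inl (hp2.trans_le hu.1).ne')
  have hest : ∀ L₁ L₂, p / 2 ≤ L₁ → L₁ ≤ L₂ → L₂ ≤ L₀ →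
      |(∫ u in 0..L₂, (L₂ - u) ^ (α - 1) * G u) - ∫ u in 0..L₁, (L₁ - u) ^ (α - 1) * G u|
        ≤ M * (B * L₁ ^ (α + k) - B * L₂ ^ (α + k) + 2 * (C * ((L₂ - L₁) ^ α / α))) :=
    fun L₁ L₂ hL₁ h12 hL₂ => abs_integral_sub_rpow_mul_sub_le_of_abs_rpow_le hα hα1 hk hM
      (hp2.trans_le hL₁) h12
      (hGm.mono_measure (Measure.restrict_mono (Ioc_subset_Ioc_right hL₂) le_rfl))
      (fun u hu => hG u ⟨hu.1, hu.2.trans hL₂⟩)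
      fun u hu => hC u ⟨hL₁.trans hu.1.le, hu.2.trans hL₂⟩
  set ψ : ℝ → ℝ := fun L => M * (|B * L ^ (α + k) - B * p ^ (α + k)| + 2 * (C * (|L - p| ^ α / α)))
  have hψ : Tendsto ψ (𝓝 p) (𝓝 0) := by
    have hcont : ContinuousAt ψ p := by
      fun_prop (disch := first | exact Or.inl hp.1.ne' | exact Or.inr hα.le)
    simpa [ψ, zero_rpow hα.ne'] using hcont.tendsto
  have hle : ∀ᶠ L in 𝓝[Ioc 0 L₀] p,
      ‖(∫ u in 0..L, (L - u) ^ (α - 1) * G u) - ∫ u in 0..p, (p - u) ^ (α - 1) * G u‖ ≤ ψ L := by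
    filter_upwards [self_mem_nhdsWithin,
      nhdsWithin_le_nhds (Ioi_mem_nhds (by linarith [hp.1] : p / 2 < p))] with L hL hLp
    rw [Real.norm_eq_abs]
    rcases le_total L p with h | h
    · rw [abs_sub_comm]
      refine (hest L p (le_of_lt hLp) h hp.2).trans ?_
      simp only [ψ]
      rw [abs_sub_comm L p, abs_of_nonneg (sub_nonneg.2 h)]
      gcongr
      exact le_abs_self _
    · refine (hest p L (by linarith) h hL.2).trans ?_
      simp only [ψ]
      rw [abs_of_nonneg (sub_nonneg.2 h), abs_sub_comm]
      gcongr
      exact le_abs_self _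
  rw [ContinuousWithinAt, tendsto_iff_norm_sub_tendsto_zero]
  exact squeeze_zero' (.of_forall fun _ => norm_nonneg _) hle (hψ.mono_left nhdsWithin_le_nhds)

theorem continuousOn_riemannLiouville (hα : 0 < α) (hα1 : α ≤ 1) (hk : -1 < k) (hM : 0 ≤ M)
    {G : ℝ → ℝ} {L₀ : ℝ} (hGm : AEStronglyMeasurable G (volume.restrict (Ioc 0 L₀)))
    (hG : ∀ u ∈ Ioc 0 L₀, |G u| ≤ M * u ^ k) :
    ContinuousOn (riemannLiouville α G) (Ioc 0 L₀) :=
  continuousOn_const.mul (continuousOn_integral_sub_rpow_mul hα hα1 hk hM hGm hG)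

end RiemannLiouville

section Hadamard

noncomputable def hadamardIntegral (α : ℝ) (g : ℝ → ℝ) (t : ℝ) : ℝ :=
  1 / Gamma α * ∫ s in (1:ℝ)..t, log (t / s) ^ (α - 1) * g s / s

variable {α k M : ℝ}

theorem hadamardIntegral_eq_riemannLiouville (g : ℝ → ℝ) {t : ℝ} (ht : 0 < t) :
    hadamardIntegral α g t = riemannLiouville α (fun u => g (exp u)) (log t) := by
  have hsubst := integral_comp_mul_deriv_of_deriv_nonneg (a := 0) (b := log t) (f := exp)
    (f' := exp) (g := fun s => log (t / s) ^ (α - 1) * g s / s) continuousOn_exp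
    (fun u _ => hasDerivAt_exp u) (fun u _ => (exp_pos u).le)
  rw [exp_zero, exp_log ht] at hsubst
  rw [hadamardIntegral, riemannLiouville, ← hsubst]
  congr 1
  refine integral_congr fun u _ => ?_
  simp only [Function.comp_apply, log_div ht.ne' (exp_pos u).ne', log_exp]
  field_simp [(exp_pos u).ne']

theorem abs_comp_exp_le {g : ℝ → ℝ} {T : ℝ} (hT : 0 < T)
    (hg : ∀ s ∈ Ioc 1 T, |g s| ≤ M * log s ^ k) :
    ∀ u ∈ Ioc 0 (log T), |g (exp u)| ≤ M * u ^ k := fun u hu => by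
  simpa using hg (exp u) ⟨one_lt_exp_iff.2 hu.1, (le_log_iff_exp_le hT).1 hu.2⟩

theorem continuousOn_hadamardIntegral (hα : 0 < α) (hα1 : α ≤ 1) (hk : -1 < k) (hM : 0 ≤ M)
    {g : ℝ → ℝ} {T : ℝ} (hgm : AEMeasurable g (volume.restrict (Ioc 1 T)))
    (hg : ∀ s ∈ Ioc 1 T, |g s| ≤ M * log s ^ k) :
    ContinuousOn (hadamardIntegral α g) (Ioc 1 T) := by
  rcases le_or_gt T 1 with hT | hT
  · rw [Ioc_eq_empty hT.not_gt]
    exact continuousOn_empty _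
  have hGm : AEMeasurable (fun u => g (exp u)) (volume.restrict (Ioc 0 (log T))) :=
    AEMeasurable.comp_exp (by rwa [exp_zero, exp_log (by linarith)])
  have hRL := continuousOn_riemannLiouville hα hα1 hk hM hGm.aestronglyMeasurable
    (abs_comp_exp_le (by linarith) hg)
  refine (hRL.comp (continuousOn_log.mono fun s hs => ne_of_gt (by linarith [hs.1]))
    fun s hs => ⟨log_pos hs.1, log_le_log (by linarith [hs.1]) hs.2⟩).congr fun t ht => ?_
  exact hadamardIntegral_eq_riemannLiouville g (by linarith [ht.1])

theorem abs_hadamardIntegral_le (hα : 0 < α) (hk : -1 < k) {g : ℝ → ℝ} {t : ℝ} (ht : 1 < t)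
    (hg : ∀ s ∈ Ioc 1 t, |g s| ≤ M * log s ^ k) :
    |hadamardIntegral α g t| ≤ M * (Gamma (k + 1) / Gamma (α + k + 1)) * log t ^ (α + k) := by
  rw [hadamardIntegral_eq_riemannLiouville g (by linarith), mul_assoc,
    ← riemannLiouville_rpow hα hk (log_pos ht)]
  exact abs_riemannLiouville_le hα hk (log_pos ht) (abs_comp_exp_le (by linarith) hg)

theorem abs_rpow_mul_hadamardIntegral_le (hα : 0 < α) (hk : -1 < k) (hM : 0 ≤ M) {γ l t : ℝ}
    (hγ : γ ≤ α + k + 1) (ht : t ∈ Ioc 1 (1 + l)) {g : ℝ → ℝ}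
    (hg : ∀ s ∈ Ioc 1 t, |g s| ≤ M * log s ^ k) :
    |log t ^ (1 - γ) * hadamardIntegral α g t|
      ≤ M * l ^ (α + k + 1 - γ) * (Gamma (k + 1) / Gamma (α + k + 1)) := by
  have hL := log_pos ht.1
  have hLl : log t ≤ l := (log_le_sub_one_of_pos (by linarith [ht.1])).trans (by linarith [ht.2])
  have hΓ : 0 ≤ Gamma (k + 1) / Gamma (α + k + 1) :=
    div_nonneg (Gamma_pos_of_pos (by linarith)).le (Gamma_pos_of_pos (by linarith)).le
  rw [abs_mul, abs_of_pos (rpow_pos_of_pos hL _)]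
  calc log t ^ (1 - γ) * |hadamardIntegral α g t|
      ≤ log t ^ (1 - γ) * (M * (Gamma (k + 1) / Gamma (α + k + 1)) * log t ^ (α + k)) :=
        mul_le_mul_of_nonneg_left (abs_hadamardIntegral_le hα hk ht.1 hg) (rpow_pos_of_pos hL _).le
    _ = M * log t ^ (α + k + 1 - γ) * (Gamma (k + 1) / Gamma (α + k + 1)) := by
        rw [show α + k + 1 - γ = (1 - γ) + (α + k) by ring, rpow_add hL (1 - γ) (α + k)]
        ring
    _ ≤ M * l ^ (α + k + 1 - γ) * (Gamma (k + 1) / Gamma (α + k + 1)) := by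
        gcongr

end Hadamard

theorem rpow_mul_rpow_mul_cancel {x a b : ℝ} (hx : 0 < x) (hab : a + b = 0) (c : ℝ) :
    x ^ a * (x ^ b * c) = c := by
  rw [← mul_assoc, ← rpow_add hx, hab, rpow_zero, one_mul]

theorem continuousOn_log_rpow (c : ℝ) : ContinuousOn (fun t => log t ^ c) (Ioi 1) :=
  (continuousOn_log.mono fun _ ht => ne_of_gt (zero_lt_one.trans ht)).rpow_const
    fun _ ht => Or.inl (log_pos ht).ne'

theorem aemeasurable_comp_of_log_rpow_mul_mem {f : ℝ → ℝ → ℝ} {φ : ℝ → ℝ} {γ c d T : ℝ}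
    (hcd : c ≤ d)
    (hf_cont : ∀ t ∈ Ioc 1 T, ContinuousOn (fun x => f t (log t ^ (γ - 1) * x)) (Icc c d))
    (hf_meas : ∀ x ∈ Icc c d,
      AEMeasurable (fun t => f t (log t ^ (γ - 1) * x)) (volume.restrict (Ioc 1 T)))
    (hφ : ContinuousOn φ (Ioc 1 T)) (hφ_mem : ∀ t ∈ Ioc 1 T, log t ^ (1 - γ) * φ t ∈ Icc c d) :
    AEMeasurable (fun t => f t (φ t)) (volume.restrict (Ioc 1 T)) := by
  refine (aemeasurable_comp_of_continuousOn (F := fun t x => f t (log t ^ (γ - 1) * x)) hcd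
    (ae_restrict_of_forall_mem measurableSet_Ioc hf_cont) hf_meas
    (x := fun t => log t ^ (1 - γ) * φ t)
    ((((continuousOn_log_rpow _).mono Ioc_subset_Ioi_self).mul hφ).aemeasurable measurableSet_Ioc)
    (ae_restrict_of_forall_mem measurableSet_Ioc hφ_mem)).congr ?_
  filter_upwards [ae_restrict_mem measurableSet_Ioc] with t ht
  rw [rpow_mul_rpow_mul_cancel (log_pos ht.1) (by ring)]

theorem picard_succ (α γ x₀ : ℝ) (f : ℝ → ℝ → ℝ) (n : ℕ) (t : ℝ) :
    picard α γ x₀ f (n + 1) t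
      = x₀ * log t ^ (γ - 1) + hadamardIntegral α (fun s => f s (picard α γ x₀ f n s)) t :=
  rfl

theorem picard_iterates_continuous_and_bounded_general (α β γ x₀ h b M k : ℝ) (f : ℝ → ℝ → ℝ)
    (hα0 : 0 < α) (hα1 : α < 1) (hβ0 : 0 ≤ β)
    (hγ : γ = α + β * (1 - α))
    (hb : 0 < b) (hM : 0 ≤ M) (hk : β * (1 - α) - 1 < k)
    (H1cont : ∀ t ∈ Set.Ioc (1:ℝ) (1 + h),
      ContinuousOn (fun x : ℝ => f t (Real.log t ^ (γ - 1) * x)) (Set.Icc (x₀ - b) (x₀ + b)))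
    (H1meas : ∀ x ∈ Set.Icc (x₀ - b) (x₀ + b),
      AEMeasurable (fun t : ℝ => f t (Real.log t ^ (γ - 1) * x))
        (MeasureTheory.volume.restrict (Set.Ioc (1:ℝ) (1 + h))))
    (H1bdd : ∀ t ∈ Set.Ioc (1:ℝ) (1 + h), ∀ x ∈ Set.Icc (x₀ - b) (x₀ + b),
      |f t (Real.log t ^ (γ - 1) * x)| ≤ M * Real.log t ^ k)
    (l : ℝ) (hlh : l ≤ h)
    (hlb : M * l ^ (α + k + 1 - γ) * (Real.Gamma (k + 1) / Real.Gamma (α + k + 1)) ≤ b)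
    : ∀ n : ℕ, ContinuousOn (picard α γ x₀ f n) (Set.Ioc 1 (1 + l)) ∧
      ∀ t ∈ Set.Ioc (1:ℝ) (1 + l),
        |Real.log t ^ (1 - γ) * picard α γ x₀ f n t - x₀| ≤ b := by
  have hk' : -1 < k := by nlinarith [mul_nonneg hβ0 (sub_nonneg.2 hα1.le)]
  have hγk : γ ≤ α + k + 1 := by rw [hγ]; linarith
  have hsub : Ioc (1:ℝ) (1 + l) ⊆ Ioc 1 (1 + h) := Ioc_subset_Ioc_right (by linarith)
  have hlogc : ContinuousOn (fun t => log t ^ (γ - 1)) (Ioc 1 (1 + l)) :=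
    (continuousOn_log_rpow _).mono Ioc_subset_Ioi_self
  intro n
  induction n with
  | zero =>
    refine ⟨continuousOn_const.mul hlogc, fun t ht => ?_⟩
    simp only [picard]
    rw [mul_comm x₀, rpow_mul_rpow_mul_cancel (log_pos ht.1) (by ring), sub_self, abs_zero]
    exact hb.le
  | succ n ih =>
    obtain ⟨hcont, hbd⟩ := ih
    have hx : ∀ s ∈ Ioc 1 (1 + l), log s ^ (1 - γ) * picard α γ x₀ f n s ∈ Icc (x₀ - b) (x₀ + b) :=
      fun s hs => mem_Icc_iff_abs_le.1 (abs_sub_comm x₀ _ ▸ hbd s hs)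
    have hgm := aemeasurable_comp_of_log_rpow_mul_mem (by linarith)
      (fun t ht => H1cont t (hsub ht))
      (fun x hx => (H1meas x hx).mono_measure (Measure.restrict_mono hsub le_rfl)) hcont hx
    have hgb : ∀ s ∈ Ioc 1 (1 + l), |f s (picard α γ x₀ f n s)| ≤ M * log s ^ k := fun s hs =>
      by simpa only [rpow_mul_rpow_mul_cancel (log_pos hs.1) (by ring : γ - 1 + (1 - γ) = 0)]
        using H1bdd s (hsub hs) _ (hx s hs)
    refine ⟨(continuousOn_const.mul hlogc).add
      (continuousOn_hadamardIntegral hα0 hα1.le hk' hM hgm hgb), fun t ht => ?_⟩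
    rw [picard_succ, mul_add, mul_comm x₀, rpow_mul_rpow_mul_cancel (log_pos ht.1) (by ring),
      add_sub_cancel_left]
    exact (abs_rpow_mul_hadamardIntegral_le hα0 hk' hM hγk ht
      fun s hs => hgb s ⟨hs.1, hs.2.trans ht.2⟩).trans hlb

theorem picard_iterates_continuous_and_bounded (α β γ x₀ h b M k : ℝ) (f : ℝ → ℝ → ℝ)
    (hα0 : 0 < α) (hα1 : α < 1) (hβ0 : 0 ≤ β) (hβ1 : β ≤ 1)
    (hγ : γ = α + β * (1 - α))
    (hh : 0 < h) (hb : 0 < b) (hM : 0 ≤ M) (hk : β * (1 - α) - 1 < k)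
    (H1cont : ∀ t ∈ Set.Ioc (1:ℝ) (1 + h),
      ContinuousOn (fun x : ℝ => f t (Real.log t ^ (γ - 1) * x)) (Set.Icc (x₀ - b) (x₀ + b)))
    (H1meas : ∀ x ∈ Set.Icc (x₀ - b) (x₀ + b),
      AEMeasurable (fun t : ℝ => f t (Real.log t ^ (γ - 1) * x))
        (MeasureTheory.volume.restrict (Set.Ioc (1:ℝ) (1 + h))))
    (H1bdd : ∀ t ∈ Set.Ioc (1:ℝ) (1 + h), ∀ x ∈ Set.Icc (x₀ - b) (x₀ + b),
      |f t (Real.log t ^ (γ - 1) * x)| ≤ M * Real.log t ^ k)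
    (l : ℝ) (hl0 : 0 < l) (hlh : l ≤ h)
    (hlb : M * l ^ (α + k + 1 - γ) * (Real.Gamma (k + 1) / Real.Gamma (α + k + 1)) ≤ b)
    : ∀ n : ℕ, ContinuousOn (picard α γ x₀ f n) (Set.Ioc 1 (1 + l)) ∧
      ∀ t ∈ Set.Ioc (1:ℝ) (1 + l),
        |Real.log t ^ (1 - γ) * picard α γ x₀ f n t - x₀| ≤ b :=
  picard_iterates_continuous_and_bounded_general α β γ x₀ h b M k f hα0 hα1 hβ0 hγ hb hM hk H1cont
    H1meas H1bdd l hlh hlb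
end

section
/- Let 0 < α < 1, 0 ≤ β ≤ 1, γ = α + β(1-α), k > β(1-α) - 1, A > 0, M ≥ 0, and l > 0. Define uₙ = M A^{n+1} l^{(n+2)(α+k+1-γ)} · ∏_{i=0}^{n+1} Γ((i+1)k + i(α+1-γ) + 1)/Γ((i+1)(α+k) + i(1-γ) + 1) for n ≥ 1. Then uₙ₊₁/uₙ → 0 as n → ∞ (when M > 0), and the series ∑_{n=1}^{∞} uₙ converges. -/
open Real Filter

theorem ratio_tendsto_zero_and_series_converges (α β γ k A M l : ℝ)
    (hα0 : 0 < α) (hα1 : α < 1) (hβ0 : 0 ≤ β) (hβ1 : β ≤ 1)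
    (hγ : γ = α + β * (1 - α)) (hk : β * (1 - α) - 1 < k)
    (hA : 0 < A) (hM : 0 ≤ M) (hl : 0 < l)
    (u : ℕ → ℝ)
    (hu : ∀ n : ℕ, u n = M * A ^ (n + 1) * l ^ (((n : ℝ) + 2) * (α + k + 1 - γ)) *
      ∏ i ∈ Finset.range (n + 2),
        Real.Gamma (((i : ℝ) + 1) * k + (i : ℝ) * (α + 1 - γ) + 1) /
          Real.Gamma (((i : ℝ) + 1) * (α + k) + (i : ℝ) * (1 - γ) + 1)) :
    (0 < M → Filter.Tendsto (fun n : ℕ => u (n + 2) / u (n + 1)) Filter.atTop (nhds 0)) ∧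
      Summable (fun n : ℕ => u (n + 1)) := by
  have hβα : 0 ≤ β * (1 - α) := mul_nonneg hβ0 (by linarith)
  have hβα1 : β * (1 - α) ≤ 1 - α := by nlinarith
  set d : ℝ := α + 1 - γ with hd
  have hd0 : 0 < d := by rw [hd, hγ]; nlinarith
  have hkd : 0 < k + d := by rw [hd, hγ]; nlinarith
  have hk1 : 0 < k + 1 := by linarith
  set c : ℝ := α + k + 1 - γ with hc
  have hcd : c = k + d := by rw [hc, hd]; ring
  -- the linear sequence of Gamma arguments
  set x : ℕ → ℝ := fun i => (i : ℝ) * (k + d) + (k + 1) with hx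
  have hxpos : ∀ i : ℕ, 0 < x i := fun i => by
    have : (0:ℝ) ≤ (i:ℝ) := Nat.cast_nonneg i
    simp only [hx]; nlinarith
  have hxnum : ∀ i : ℕ, ((i : ℝ) + 1) * k + (i : ℝ) * (α + 1 - γ) + 1 = x i := by
    intro i; simp only [hx, hd]; ring
  have hxden : ∀ i : ℕ, ((i : ℝ) + 1) * (α + k) + (i : ℝ) * (1 - γ) + 1 = x i + α := by
    intro i; simp only [hx, hd]; ring
  set g : ℕ → ℝ := fun i => Real.Gamma (x i) / Real.Gamma (x i + α) with hg
  have hgpos : ∀ i : ℕ, 0 < g i := fun i =>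
    div_pos (Real.Gamma_pos_of_pos (hxpos i)) (Real.Gamma_pos_of_pos (by linarith [hxpos i]))
  -- rewrite u in terms of g
  have hu' : ∀ n : ℕ, u n = M * A ^ (n + 1) * l ^ (((n : ℝ) + 2) * c) *
      ∏ i ∈ Finset.range (n + 2), g i := by
    intro n
    rw [hu n]
    congr 1
    exact Finset.prod_congr rfl fun i _ => by rw [hxnum i, hxden i]
  have hPpos : ∀ m : ℕ, 0 < ∏ i ∈ Finset.range m, g i :=
    fun m => Finset.prod_pos fun i _ => hgpos i
  -- key Gamma ratio bound
  have key : ∀ y : ℝ, 0 < y → Real.Gamma y / Real.Gamma (y + α) ≤ (y + α) ^ (1 - α) / y := by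
    intro y hy
    have hya : 0 < y + α := by linarith
    have hGya : 0 < Real.Gamma (y + α) := Real.Gamma_pos_of_pos hya
    have h1 : Real.Gamma (y + 1) ≤
        Real.Gamma (y + α) ^ α * Real.Gamma (y + 1 + α) ^ (1 - α) := by
      have := Real.Gamma_mul_add_mul_le_rpow_Gamma_mul_rpow_Gamma (s := y + α)
        (t := y + 1 + α) (a := α) (b := 1 - α) hya (by linarith) hα0 (by linarith) (by ring)
      have he : α * (y + α) + (1 - α) * (y + 1 + α) = y + 1 := by ring
      rwa [he] at this
    have h2 : Real.Gamma (y + 1 + α) = (y + α) * Real.Gamma (y + α) := by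
      have := Real.Gamma_add_one (s := y + α) (ne_of_gt hya)
      rw [show y + 1 + α = y + α + 1 by ring, this]
    have h3 : Real.Gamma (y + α) ^ α * Real.Gamma (y + 1 + α) ^ (1 - α) =
        (y + α) ^ (1 - α) * Real.Gamma (y + α) := by
      have hGG : Real.Gamma (y + α) ^ α * Real.Gamma (y + α) ^ (1 - α) =
          Real.Gamma (y + α) := by
        rw [← Real.rpow_add hGya]; norm_num
      rw [h2, Real.mul_rpow hya.le hGya.le]
      linear_combination ((y + α) ^ (1 - α)) * hGG
    have h4 : Real.Gamma (y + 1) = y * Real.Gamma y := Real.Gamma_add_one (ne_of_gt hy)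
    rw [h3, h4] at h1
    rw [div_le_div_iff₀ (Real.Gamma_pos_of_pos hya) hy]
    nlinarith [h1]
  -- the ratio formula
  have hratio : 0 < M → ∀ n : ℕ, u (n + 2) / u (n + 1) = A * l ^ c * g (n + 3) := by
    intro hM0 n
    have hlp : ∀ e : ℝ, (0:ℝ) < l ^ e := fun e => Real.rpow_pos_of_pos hl e
    have hne : u (n + 1) ≠ 0 := by
      rw [hu' (n + 1)]
      positivity
    have hstep : u (n + 2) = (A * l ^ c * g (n + 3)) * u (n + 1) := by
      rw [hu' (n + 2), hu' (n + 1)]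
      have hprod : ∏ i ∈ Finset.range (n + 4), g i =
          (∏ i ∈ Finset.range (n + 3), g i) * g (n + 3) := Finset.prod_range_succ g (n + 3)
      have hexp : l ^ (((n : ℝ) + 2 + 2) * c) = l ^ (((n : ℝ) + 1 + 2) * c) * l ^ c := by
        rw [← Real.rpow_add hl]; ring_nf
      push_cast at hexp ⊢
      rw [show n + 2 + 2 = n + 4 from rfl, show n + 1 + 2 = n + 3 from rfl] at *
      rw [hprod, hexp]
      ring
    rw [hstep, mul_div_assoc, div_self hne, mul_one]
  -- tendsto of the ratio
  have htend : Filter.Tendsto (fun n : ℕ => A * l ^ c * g (n + 3)) Filter.atTop (nhds 0) := by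
    have hy : Filter.Tendsto (fun n : ℕ => x (n + 3)) Filter.atTop Filter.atTop := by
      have h1 : Filter.Tendsto (fun n : ℕ => ((n : ℝ) + 3) * (k + d) + (k + 1))
          Filter.atTop Filter.atTop := by
        apply Filter.tendsto_atTop_add_const_right
        apply Filter.Tendsto.atTop_mul_const hkd
        exact Filter.tendsto_atTop_add_const_right _ _ tendsto_natCast_atTop_atTop
      convert h1 using 2 with n
      simp only [hx]; push_cast; ring
    have hbound : ∀ᶠ n : ℕ in Filter.atTop,
        g (n + 3) ≤ 2 * (x (n + 3)) ^ (-α) := by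
      filter_upwards [hy.eventually_ge_atTop α, hy.eventually_ge_atTop 1] with n hnα hn1
      have hxp := hxpos (n + 3)
      have h1 : g (n + 3) ≤ (x (n + 3) + α) ^ (1 - α) / x (n + 3) := key _ hxp
      have h2 : (x (n + 3) + α) ^ (1 - α) ≤ (2 * x (n + 3)) ^ (1 - α) := by
        apply Real.rpow_le_rpow (by linarith) (by linarith) (by linarith)
      have h3 : (2 * x (n + 3)) ^ (1 - α) = 2 ^ (1 - α) * x (n + 3) ^ (1 - α) :=
        Real.mul_rpow (by norm_num) hxp.le
      have h4 : (2:ℝ) ^ (1 - α) ≤ 2 ^ (1:ℝ) :=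
        Real.rpow_le_rpow_of_exponent_le (by norm_num) (by linarith)
      have h5 : x (n + 3) ^ (1 - α) / x (n + 3) = x (n + 3) ^ (-α) := by
        rw [show (1 : ℝ) - α = -α + 1 by ring, Real.rpow_add hxp, Real.rpow_one,
          mul_div_assoc, div_self (ne_of_gt hxp), mul_one]
      have h6 : (0:ℝ) < x (n + 3) ^ (1 - α) := Real.rpow_pos_of_pos hxp _
      calc g (n + 3) ≤ (x (n + 3) + α) ^ (1 - α) / x (n + 3) := h1
        _ ≤ 2 ^ (1 - α) * x (n + 3) ^ (1 - α) / x (n + 3) := by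
            rw [← h3]; exact (div_le_div_iff_of_pos_right hxp).mpr h2
        _ ≤ 2 * x (n + 3) ^ (1 - α) / x (n + 3) := by
            apply (div_le_div_iff_of_pos_right hxp).mpr
            have h7 : (2:ℝ) ^ (1:ℝ) = 2 := Real.rpow_one 2
            nlinarith [h4, h6]
        _ = 2 * (x (n + 3) ^ (-α)) := by rw [mul_div_assoc, h5]
    have hzero : Filter.Tendsto (fun n : ℕ => A * l ^ c * (2 * (x (n + 3)) ^ (-α)))
        Filter.atTop (nhds 0) := by
      have h0 : Filter.Tendsto (fun n : ℕ => (x (n + 3)) ^ (-α)) Filter.atTop (nhds 0) :=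
        (tendsto_rpow_neg_atTop hα0).comp hy
      have := h0.const_mul (A * l ^ c * 2)
      simpa [mul_assoc] using this
    apply squeeze_zero'
    · filter_upwards with n
      exact mul_nonneg (mul_nonneg hA.le (Real.rpow_pos_of_pos hl c).le) (hgpos (n + 3)).le
    · filter_upwards [hbound] with n hn
      exact mul_le_mul_of_nonneg_left hn
        (mul_nonneg hA.le (Real.rpow_pos_of_pos hl c).le)
    · exact hzero
  constructor
  · intro hM0
    have : (fun n : ℕ => u (n + 2) / u (n + 1)) = fun n : ℕ => A * l ^ c * g (n + 3) := by
      funext n; exact hratio hM0 n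
    rw [this]; exact htend
  · rcases hM.eq_or_lt with hM0 | hM0
    · have : ∀ n : ℕ, u (n + 1) = 0 := fun n => by rw [hu (n + 1), ← hM0]; ring
      exact (summable_congr fun n => (this n).symm).mp summable_zero
    · apply summable_of_ratio_test_tendsto_lt_one (l := 0) (by norm_num)
      · filter_upwards with n
        rw [hu' (n + 1)]
        positivity
      · have heq : (fun n : ℕ => ‖u (n + 1 + 1)‖ / ‖u (n + 1)‖) =
            fun n : ℕ => A * l ^ c * g (n + 3) := by
          funext n
          have h1 : 0 < u (n + 2) := by rw [hu' (n + 2)]; positivity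
          have h2 : 0 < u (n + 1) := by rw [hu' (n + 1)]; positivity
          rw [show n + 1 + 1 = n + 2 from rfl, Real.norm_eq_abs, Real.norm_eq_abs,
            abs_of_pos h1, abs_of_pos h2]
          exact hratio hM0 n
        rw [heq]; exact htend
end

section
/- Assume (H1) and (H2), and let l ∈ (0,h] satisfy M · l^{α+k+1-γ} · Γ(k+1)/Γ(α+k+1) ≤ b. If φ and ψ are both continuous functions on (1,1+l] satisfying |(log t)^{1-γ} φ(t) - x₀| ≤ b and |(log t)^{1-γ} ψ(t) - x₀| ≤ b for all t ∈ (1,1+l], and both satisfy the Volterra integral equation x(t) = x₀ (log t)^{γ-1} + (1/Γ(α)) ∫₁ᵗ (log(t/s))^{α-1} f(s, x(s)) ds/s on (1,1+l], then φ(t) = ψ(t) for all t ∈ (1,1+l]. -/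
/-!
Work with the weighted difference `W t = |(log t)^(1-γ) φ t - (log t)^(1-γ) ψ t| ≤ 2b`. By (H2)
the two integral equations give
`W t ≤ A/Γ(α) · E · (log t)^(1-γ) ∫_σ^t (log (t/s))^(α-1) (log s)^k ds/s`
whenever `W ≤ E` on `(σ, t)` and `W = 0` on `(1, σ]`.
For `σ = 1` the kernel integral is `O((log t)^(α+k))`, so the right side is
`O((log t)^(α+k+1-γ)) · E`; as `α+k+1-γ > 0` it is at most `E/2` on a short interval `(1, τ]`,
and halving the bound `2b` repeatedly gives `W = 0` there. Beyond `τ` the powers of `log` are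
bounded and the integral is `O((log (t/σ))^α)`, so the same halving shows that vanishing up to
`σ ≥ τ` propagates to `qσ` for a fixed `q > 1`; finitely many steps cover `(1, 1+l]`.
-/

open Real MeasureTheory intervalIntegral Set Filter Topology

theorem MeasureTheory.SimpleFunc.aemeasurable_comp_apply {α E β : Type*} [MeasurableSpace α]
    [MeasurableSpace E] [MeasurableSpace β] {μ : Measure α} {F : α → E → β} (g : SimpleFunc α E)
    (hF : ∀ y ∈ range g, AEMeasurable (F · y) μ) :
    AEMeasurable (fun a => F a (g a)) μ := by
  have hcover : (⋃ y : g.range, g ⁻¹' {(y : E)}) = univ :=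
    eq_univ_of_forall fun a => mem_iUnion.2 ⟨⟨g a, g.mem_range_self a⟩, rfl⟩
  rw [← Measure.restrict_univ (μ := μ), ← hcover, aemeasurable_iUnion_iff]
  rintro ⟨y, hy⟩
  refine ((hF y (g.mem_range.1 hy)).mono_measure Measure.restrict_le_self).congr ?_
  filter_upwards [ae_restrict_mem (g.measurableSet_fiber y)] with a ha
  rw [show g a = y from ha]

theorem aemeasurable_comp_of_continuousOn_of_aemeasurable {α E β : Type*} [MeasurableSpace α]
    {μ : Measure α} [PseudoMetricSpace E] [SecondCountableTopology E] [MeasurableSpace E]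
    [BorelSpace E] [TopologicalSpace β] [TopologicalSpace.PseudoMetrizableSpace β]
    [MeasurableSpace β] [BorelSpace β] {F : α → E → β} {X : α → E} {K : Set E}
    (hFc : ∀ᵐ a ∂μ, ContinuousOn (F a) K) (hFm : ∀ y ∈ K, AEMeasurable (F · y) μ)
    (hX : AEMeasurable X μ) (hXK : ∀ᵐ a ∂μ, X a ∈ K) :
    AEMeasurable (fun a => F a (X a)) μ := by
  rcases K.eq_empty_or_nonempty with rfl | ⟨y₀, hy₀⟩
  · simp [ae_iff] at hXK
    simp [hXK]
  let g n := SimpleFunc.approxOn (hX.mk X) hX.measurable_mk K y₀ hy₀ n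
  refine aemeasurable_of_tendsto_metrizable_ae' (f := fun n a => F a (g n a))
    (fun n => (g n).aemeasurable_comp_apply ?_) ?_
  · rintro y ⟨a, rfl⟩
    exact hFm _ (SimpleFunc.approxOn_mem _ _ _ _)
  · filter_upwards [hFc, hXK, hX.ae_eq_mk] with a hca hXa hmk
    refine (hca _ hXa).tendsto.comp (tendsto_nhdsWithin_iff.2 ⟨?_, .of_forall fun n => ?_⟩)
    · rw [hmk]
      exact SimpleFunc.tendsto_approxOn _ _ (subset_closure (hmk ▸ hXa))
    · exact SimpleFunc.approxOn_mem _ _ _ _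

theorem integrableOn_Ioo_and_integral_eq_of_hasDerivAt_of_nonneg {g g' : ℝ → ℝ} {a b : ℝ}
    (hab : a ≤ b) (hcont : ContinuousOn g (Icc a b))
    (hderiv : ∀ x ∈ Ioo a b, HasDerivAt g (g' x) x) (hpos : ∀ x ∈ Ioo a b, 0 ≤ g' x) :
    IntegrableOn g' (Ioo a b) ∧ ∫ x in Ioo a b, g' x = g b - g a := by
  have hint := integrableOn_deriv_of_nonneg hcont hderiv hpos
  refine ⟨hint.mono_set Ioo_subset_Ioc_self, ?_⟩
  rw [← integral_Ioc_eq_integral_Ioo, ← intervalIntegral.integral_of_le hab,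
    integral_eq_sub_of_hasDerivAt_of_le hab hcont hderiv
      ((intervalIntegrable_iff_integrableOn_Ioc_of_le hab).2 hint)]

theorem integrableOn_and_integral_log_rpow_div {k r : ℝ} (hk : -1 < k) (hr : 1 ≤ r) :
    IntegrableOn (fun s => log s ^ k / s) (Ioo 1 r) ∧
      ∫ s in Ioo 1 r, log s ^ k / s = log r ^ (k + 1) / (k + 1) := by
  have hk1 : k + 1 ≠ 0 := by linarith
  have h := integrableOn_Ioo_and_integral_eq_of_hasDerivAt_of_nonneg
    (g := fun s => log s ^ (k + 1) / (k + 1)) (g' := fun s => log s ^ k / s) hr ?_ ?_ ?_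
  · simpa [zero_rpow hk1] using h
  · refine ((continuousOn_log.mono fun s hs => ?_).rpow_const
      fun _ _ => Or.inr (by linarith)).div_const _
    exact (zero_lt_one.trans_le hs.1).ne'
  · intro s hs
    have hs0 : 0 < s := zero_lt_one.trans hs.1
    refine (((hasDerivAt_log hs0.ne').rpow_const (Or.inl (log_pos hs.1).ne')).div_const
      (k + 1)).congr_deriv ?_
    rw [add_sub_cancel_right]
    field_simp
  · intro s hs
    exact div_nonneg (rpow_nonneg (log_nonneg hs.1.le) _) (zero_lt_one.trans hs.1).le

theorem integrableOn_and_integral_log_div_rpow_div {a σ t : ℝ} (ha : 0 < a) (hσ : 0 < σ)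
    (hσt : σ ≤ t) :
    IntegrableOn (fun s => log (t / s) ^ (a - 1) / s) (Ioo σ t) ∧
      ∫ s in Ioo σ t, log (t / s) ^ (a - 1) / s = log (t / σ) ^ a / a := by
  have h := integrableOn_Ioo_and_integral_eq_of_hasDerivAt_of_nonneg
    (g := fun s => -(log (t / s) ^ a / a)) (g' := fun s => log (t / s) ^ (a - 1) / s) hσt ?_ ?_ ?_
  · simpa [zero_rpow ha.ne'] using h
  · refine (((continuousOn_const.div continuousOn_id fun s hs => ?_).log fun s hs => ?_).rpow_const
      fun _ _ => Or.inr ha.le).div_const _ |>.neg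
    · exact (hσ.trans_le hs.1).ne'
    · exact (div_pos (hσ.trans_le (hs.1.trans hs.2)) (hσ.trans_le hs.1)).ne'
  · intro s hs
    have hs0 : 0 < s := hσ.trans hs.1
    have hts : 0 < log (t / s) := log_pos ((one_lt_div hs0).2 hs.2)
    have hlog : HasDerivAt (fun s => log (t / s)) (-s⁻¹) s := by
      have hdiv : HasDerivAt (fun s => t / s) (-t / s ^ 2) s := by
        simpa [div_eq_mul_inv] using (hasDerivAt_inv hs0.ne').const_mul t
      refine (hdiv.log (div_pos (hs0.trans hs.2) hs0).ne').congr_deriv ?_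
      field_simp [(hs0.trans hs.2).ne']
    refine ((hlog.rpow_const (Or.inl hts.ne')).div_const a).neg.congr_deriv ?_
    field_simp
  · intro s hs
    have hs0 : 0 < s := hσ.trans hs.1
    exact div_nonneg (rpow_nonneg (log_nonneg ((one_le_div hs0).2 hs.2.le)) _) hs0.le

theorem rpow_le_rpow_add_rpow {x y z : ℝ} (e : ℝ) (hx : 0 < x) (hxy : x ≤ y) (hyz : y ≤ z) :
    y ^ e ≤ x ^ e + z ^ e := by
  rcases le_total 0 e with he | he
  · linarith [rpow_le_rpow (hx.le.trans hxy) hyz he, rpow_nonneg hx.le e]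
  · linarith [rpow_le_rpow_of_nonpos hx hxy he, rpow_nonneg (hx.le.trans (hxy.trans hyz)) e]

/-- The factor whose base is at least `(x + y) / 2` is bounded; this separates the two
singularities of the kernel below. -/
theorem rpow_sub_one_mul_rpow_le {a k x y : ℝ} (ha : a ≤ 1) (hx : 0 < x) (hy : 0 < y) :
    x ^ (a - 1) * y ^ k ≤
      ((x + y) / 2) ^ (a - 1) * y ^ k + (((x + y) / 2) ^ k + (x + y) ^ k) * x ^ (a - 1) := by
  have hxa := rpow_nonneg hx.le (a - 1)
  have hyk := rpow_nonneg hy.le k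
  rcases le_total ((x + y) / 2) x with hx2 | hy2
  · have := rpow_le_rpow_of_nonpos (by linarith) hx2 (by linarith : a - 1 ≤ 0)
    nlinarith [rpow_nonneg (by linarith : (0:ℝ) ≤ (x + y) / 2) k,
      rpow_nonneg (by linarith : (0:ℝ) ≤ x + y) k]
  · have := rpow_le_rpow_add_rpow k (by linarith) (by linarith : (x + y) / 2 ≤ y)
      (by linarith : y ≤ x + y)
    nlinarith [rpow_nonneg (by linarith : (0:ℝ) ≤ (x + y) / 2) (a - 1)]

theorem log_div_rpow_mul_log_rpow_div_nonneg {a k s t : ℝ} (hs : 1 ≤ s) (hst : s ≤ t) :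
    0 ≤ log (t / s) ^ (a - 1) * log s ^ k / s := by
  have hs0 : 0 < s := zero_lt_one.trans_le hs
  exact div_nonneg (mul_nonneg (rpow_nonneg (log_nonneg ((one_le_div hs0).2 hst)) _)
    (rpow_nonneg (log_nonneg hs) _)) hs0.le

theorem log_div_rpow_mul_log_rpow_div_le {a k s t : ℝ} (ha : a ≤ 1) (hs : 1 < s) (hst : s < t) :
    log (t / s) ^ (a - 1) * log s ^ k / s ≤
      (log t / 2) ^ (a - 1) * (log s ^ k / s) +
        ((log t / 2) ^ k + log t ^ k) * (log (t / s) ^ (a - 1) / s) := by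
  have hs0 : 0 < s := zero_lt_one.trans hs
  have key := rpow_sub_one_mul_rpow_le (k := k) ha (log_pos ((one_lt_div hs0).2 hst)) (log_pos hs)
  rw [← log_mul (div_pos (hs0.trans hst) hs0).ne' hs0.ne', div_mul_cancel₀ _ hs0.ne'] at key
  calc log (t / s) ^ (a - 1) * log s ^ k / s
      ≤ ((log t / 2) ^ (a - 1) * log s ^ k +
          ((log t / 2) ^ k + log t ^ k) * log (t / s) ^ (a - 1)) / s :=
        div_le_div_of_nonneg_right key hs0.le
    _ = _ := by ring

theorem exists_integral_log_div_rpow_mul_log_rpow_le {a k : ℝ} (ha0 : 0 < a) (ha1 : a ≤ 1)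
    (hk : -1 < k) : ∃ C, 0 ≤ C ∧ ∀ t, 1 < t →
      IntegrableOn (fun s => log (t / s) ^ (a - 1) * log s ^ k / s) (Ioo 1 t) ∧
        ∫ s in Ioo 1 t, log (t / s) ^ (a - 1) * log s ^ k / s ≤ C * log t ^ (a + k) := by
  have hk1 : 0 < k + 1 := by linarith
  refine ⟨(2 ^ (a - 1))⁻¹ / (k + 1) + ((2 ^ k)⁻¹ + 1) / a, by positivity, fun t ht => ?_⟩
  set L := log t
  have hL : 0 < L := log_pos ht
  obtain ⟨hi₁, hv₁⟩ := integrableOn_and_integral_log_rpow_div hk ht.le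
  obtain ⟨hi₂, hv₂⟩ := integrableOn_and_integral_log_div_rpow_div ha0 one_pos ht.le
  let G s := (L / 2) ^ (a - 1) * (log s ^ k / s) +
    ((L / 2) ^ k + L ^ k) * (log (t / s) ^ (a - 1) / s)
  have hGi : IntegrableOn G (Ioo 1 t) := (hi₁.const_mul _).add (hi₂.const_mul _)
  have hbound : ∀ s ∈ Ioo 1 t, 0 ≤ log (t / s) ^ (a - 1) * log s ^ k / s ∧
      log (t / s) ^ (a - 1) * log s ^ k / s ≤ G s := fun s hs =>
    ⟨log_div_rpow_mul_log_rpow_div_nonneg hs.1.le hs.2.le,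
      log_div_rpow_mul_log_rpow_div_le ha1 hs.1 hs.2⟩
  have hmeas : AEStronglyMeasurable (fun s => log (t / s) ^ (a - 1) * log s ^ k / s)
      (volume.restrict (Ioo 1 t)) := by
    apply Measurable.aestronglyMeasurable
    fun_prop
  refine ⟨hGi.mono' hmeas ?_, ?_⟩
  · filter_upwards [ae_restrict_mem measurableSet_Ioo] with s hs
    rw [norm_of_nonneg (hbound s hs).1]
    exact (hbound s hs).2
  · calc ∫ s in Ioo 1 t, log (t / s) ^ (a - 1) * log s ^ k / s
        ≤ ∫ s in Ioo 1 t, G s :=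
          integral_mono_of_nonneg (ae_restrict_of_forall_mem measurableSet_Ioo
            fun s hs => (hbound s hs).1) hGi
            (ae_restrict_of_forall_mem measurableSet_Ioo fun s hs => (hbound s hs).2)
      _ = (L / 2) ^ (a - 1) * (L ^ (k + 1) / (k + 1)) + ((L / 2) ^ k + L ^ k) * (L ^ a / a) := by
          rw [integral_add (hi₁.const_mul _) (hi₂.const_mul _), MeasureTheory.integral_const_mul,
            MeasureTheory.integral_const_mul, hv₁, hv₂, div_one]
      _ = _ := by
          rw [div_rpow hL.le zero_le_two, div_rpow hL.le zero_le_two]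
          calc _ = (2 ^ (a - 1))⁻¹ / (k + 1) * (L ^ (a - 1) * L ^ (k + 1)) +
                ((2 ^ k)⁻¹ + 1) / a * (L ^ k * L ^ a) := by ring
            _ = _ := by rw [← rpow_add hL, ← rpow_add hL]; ring_nf

theorem integral_log_div_rpow_mul_log_rpow_le {α k K σ t : ℝ} (hα : 0 < α) (hσ : 1 ≤ σ)
    (hσt : σ ≤ t) (hK : ∀ s ∈ Ioo σ t, log s ^ k ≤ K) :
    ∫ s in Ioo σ t, log (t / s) ^ (α - 1) * log s ^ k / s ≤ K * (log (t / σ) ^ α / α) := by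
  obtain ⟨hi, hv⟩ := integrableOn_and_integral_log_div_rpow_div hα (zero_lt_one.trans_le hσ) hσt
  rw [← hv, ← MeasureTheory.integral_const_mul]
  refine integral_mono_of_nonneg (ae_restrict_of_forall_mem measurableSet_Ioo fun s hs => ?_)
    (hi.const_mul K) (ae_restrict_of_forall_mem measurableSet_Ioo fun s hs => ?_)
  · exact log_div_rpow_mul_log_rpow_div_nonneg (hσ.trans hs.1.le) hs.2.le
  · have hs0 : 0 < s := zero_lt_one.trans_le (hσ.trans hs.1.le)
    have hker : 0 ≤ log (t / s) ^ (α - 1) / s :=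
      div_nonneg (rpow_nonneg (log_nonneg ((one_le_div hs0).2 hs.2.le)) _) hs0.le
    calc log (t / s) ^ (α - 1) * log s ^ k / s = log s ^ k * (log (t / s) ^ (α - 1) / s) := by
          ring
      _ ≤ K * (log (t / s) ^ (α - 1) / s) := by gcongr; exact hK s hs

theorem nonpos_of_forall_le_half {ι : Type*} {S : Set ι} {w : ι → ℝ} {B : ℝ}
    (hB : ∀ x ∈ S, w x ≤ B)
    (hhalf : ∀ E, 0 ≤ E → (∀ x ∈ S, w x ≤ E) → ∀ x ∈ S, w x ≤ E / 2) :
    ∀ x ∈ S, w x ≤ 0 := by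
  have hpow : ∀ n : ℕ, ∀ x ∈ S, w x ≤ max B 0 / 2 ^ n := by
    intro n
    induction n with
    | zero => simpa using fun x hx => (hB x hx).trans (le_max_left B 0)
    | succ n ih =>
      rw [pow_succ, ← div_div]
      exact hhalf _ (by positivity) ih
  intro x hx
  exact ge_of_tendsto' (tendsto_const_nhds.div_atTop
    (tendsto_pow_atTop_atTop_of_one_lt one_lt_two)) fun n => hpow n x hx

theorem exists_pos_mul_rpow_le_half (c : ℝ) {p : ℝ} (hp : 0 < p) :
    ∃ u > 0, c * u ^ p ≤ 1 / 2 := by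
  have hlim : Tendsto (fun u : ℝ => c * u ^ p) (𝓝[>] 0) (𝓝 0) := by
    simpa [zero_rpow hp.ne'] using
      (((continuous_rpow_const hp.le).tendsto 0).mono_left nhdsWithin_le_nhds).const_mul c
  obtain ⟨u, hu, hu0⟩ :=
    ((hlim.eventually (ge_mem_nhds one_half_pos)).and self_mem_nhdsWithin).exists
  exact ⟨u, hu0, hu⟩

/-- The inequality satisfied by the weighted difference `W` of two solutions of the Volterra
equation on `(1, T]` (see `hadamardIneqOn_of_volterra`). -/
def HadamardIneqOn (α k p c T : ℝ) (W : ℝ → ℝ) : Prop :=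
  ∀ σ t E, 1 ≤ σ → σ < t → t ≤ T → (∀ s ∈ Ioc 1 σ, W s = 0) → (∀ s ∈ Ioo σ t, W s ≤ E) →
    W t ≤ c * E * log t ^ p * ∫ s in Ioo σ t, log (t / s) ^ (α - 1) * log s ^ k / s

namespace HadamardIneqOn

variable {α k p c T B : ℝ} {W : ℝ → ℝ}

theorem exists_eq_zero_near_one (hW : HadamardIneqOn α k p c T W) (hα0 : 0 < α) (hα1 : α ≤ 1)
    (hk : -1 < k) (hδ : 0 < α + k + p) (hc : 0 ≤ c) (hW0 : ∀ t ∈ Ioc 1 T, 0 ≤ W t)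
    (hB : ∀ t ∈ Ioc 1 T, W t ≤ B) :
    ∃ τ > 1, ∀ t ∈ Ioc 1 T, t ≤ τ → W t = 0 := by
  obtain ⟨C, hC, hkernel⟩ := exists_integral_log_div_rpow_mul_log_rpow_le hα0 hα1 hk
  obtain ⟨u, hu0, hu⟩ := exists_pos_mul_rpow_le_half (c * C) hδ
  refine ⟨exp u, one_lt_exp_iff.2 hu0, fun t ht htτ => le_antisymm ?_ (hW0 t ht)⟩
  refine nonpos_of_forall_le_half (S := {t | t ∈ Ioc 1 T ∧ t ≤ exp u}) (fun t ht => hB t ht.1)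
    (fun E hE hWE t ht => ?_) t ⟨ht, htτ⟩
  obtain ⟨⟨ht1, htT⟩, htu⟩ := ht
  have hlogt : 0 < log t := log_pos ht1
  have hlogu : log t ^ (α + k + p) ≤ u ^ (α + k + p) :=
    rpow_le_rpow hlogt.le ((log_le_log (by linarith) htu).trans (log_exp u).le) hδ.le
  calc W t ≤ c * E * log t ^ p * ∫ s in Ioo 1 t, log (t / s) ^ (α - 1) * log s ^ k / s :=
        hW 1 t E le_rfl ht1 htT (fun s hs => absurd hs.2 hs.1.not_ge)
          fun s hs => hWE s ⟨⟨hs.1, hs.2.le.trans htT⟩, hs.2.le.trans htu⟩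
    _ ≤ c * E * log t ^ p * (C * log t ^ (α + k)) := by gcongr; exact (hkernel t ht1).2
    _ = c * C * log t ^ (α + k + p) * E := by rw [rpow_add hlogt (α + k) p]; ring
    _ ≤ c * C * u ^ (α + k + p) * E := by gcongr
    _ ≤ 1 / 2 * E := by gcongr
    _ = E / 2 := by ring

theorem exists_eq_zero_step (hW : HadamardIneqOn α k p c T W) (hα0 : 0 < α) (hc : 0 ≤ c)
    {τ : ℝ} (hτ : 1 < τ) (hW0 : ∀ t ∈ Ioc 1 T, 0 ≤ W t) (hB : ∀ t ∈ Ioc 1 T, W t ≤ B) :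
    ∃ q > 1, ∀ σ ≥ τ, (∀ s ∈ Ioc 1 T, s ≤ σ → W s = 0) →
      ∀ t ∈ Ioc 1 T, t ≤ q * σ → W t = 0 := by
  set Kp := log τ ^ p + log T ^ p
  set Kk := log τ ^ k + log T ^ k
  have hlogτ : 0 < log τ := log_pos hτ
  obtain ⟨u, hu0, hu⟩ := exists_pos_mul_rpow_le_half (c * Kp * Kk / α) hα0
  refine ⟨exp u, one_lt_exp_iff.2 hu0, fun σ hσ hzero t ht htq => ?_⟩
  have hσ0 : 0 < σ := by linarith
  rcases le_or_gt t σ with htσ | hσt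
  · exact hzero t ht htσ
  refine le_antisymm ?_ (hW0 t ht)
  refine nonpos_of_forall_le_half (S := {t | t ∈ Ioc σ T ∧ t ≤ exp u * σ})
    (fun t ht => hB t ⟨hτ.trans_le (hσ.trans ht.1.1.le), ht.1.2⟩)
    (fun E hE hWE t ht => ?_) t ⟨⟨hσt, ht.2⟩, htq⟩
  obtain ⟨⟨hσt, htT⟩, htq⟩ := ht
  have hlogT : 0 < log T := log_pos (by linarith)
  have hKp : 0 ≤ Kp := add_nonneg (rpow_nonneg hlogτ.le _) (rpow_nonneg hlogT.le _)
  have hKk : 0 ≤ Kk := add_nonneg (rpow_nonneg hlogτ.le _) (rpow_nonneg hlogT.le _)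
  have hpow (e s : ℝ) (hσs : σ ≤ s) (hsT : s ≤ T) : log s ^ e ≤ log τ ^ e + log T ^ e :=
    rpow_le_rpow_add_rpow e hlogτ (log_le_log (by linarith) (hσ.trans hσs))
      (log_le_log (by linarith) hsT)
  have hp : log t ^ p ≤ Kp := hpow p t hσt.le htT
  have hlogσt : 0 ≤ log (t / σ) := log_nonneg ((one_le_div hσ0).2 hσt.le)
  have hlogu : log (t / σ) ≤ u := by
    rw [log_le_iff_le_exp (div_pos (hσ0.trans hσt) hσ0), div_le_iff₀ hσ0]
    exact htq
  have hkernel := integral_log_div_rpow_mul_log_rpow_le hα0 (by linarith) hσt.le fun s hs =>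
    hpow k s hs.1.le (hs.2.le.trans htT)
  calc W t ≤ c * E * log t ^ p * ∫ s in Ioo σ t, log (t / s) ^ (α - 1) * log s ^ k / s :=
        hW σ t E (by linarith) hσt htT
          (fun s hs => hzero s ⟨hs.1, hs.2.trans (hσt.le.trans htT)⟩ hs.2)
          fun s hs => hWE s ⟨⟨hs.1, hs.2.le.trans htT⟩, hs.2.le.trans htq⟩
    _ ≤ c * E * Kp * (Kk * (log (t / σ) ^ α / α)) := by
          gcongr
          exact setIntegral_nonneg measurableSet_Ioo fun s hs =>
            log_div_rpow_mul_log_rpow_div_nonneg (by linarith [hs.1]) hs.2.le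
    _ = c * Kp * Kk / α * log (t / σ) ^ α * E := by ring
    _ ≤ c * Kp * Kk / α * u ^ α * E := by gcongr
    _ ≤ 1 / 2 * E := by gcongr
    _ = E / 2 := by ring

theorem eq_zero (hW : HadamardIneqOn α k p c T W) (hα0 : 0 < α) (hα1 : α ≤ 1) (hk : -1 < k)
    (hδ : 0 < α + k + p) (hc : 0 ≤ c) (hW0 : ∀ t ∈ Ioc 1 T, 0 ≤ W t)
    (hB : ∀ t ∈ Ioc 1 T, W t ≤ B) :
    ∀ t ∈ Ioc 1 T, W t = 0 := by
  obtain ⟨τ, hτ, hnear⟩ := hW.exists_eq_zero_near_one hα0 hα1 hk hδ hc hW0 hB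
  obtain ⟨q, hq, hstep⟩ := hW.exists_eq_zero_step hα0 hc hτ hW0 hB
  have hiter (n : ℕ) : ∀ t ∈ Ioc 1 T, t ≤ q ^ n * τ → W t = 0 := by
    induction n with
    | zero => simpa using hnear
    | succ n ih =>
      rw [pow_succ', mul_assoc]
      exact hstep _ (le_mul_of_one_le_left (by linarith) (one_le_pow₀ hq.le)) ih
  obtain ⟨n, hn⟩ := ((tendsto_pow_atTop_atTop_of_one_lt hq).eventually_ge_atTop T).exists
  exact fun t ht =>
    hiter n t ht (ht.2.trans (hn.trans (le_mul_of_one_le_right (by positivity) hτ.le)))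

end HadamardIneqOn

theorem rpow_sub_one_mul_rpow_one_sub_mul {x : ℝ} (hx : 0 < x) (γ y : ℝ) :
    x ^ (γ - 1) * (x ^ (1 - γ) * y) = y := by
  rw [← mul_assoc, ← rpow_add hx]
  simp

theorem integrableOn_log_div_rpow_mul_comp {α γ k M S T : ℝ} {K : Set ℝ} {f : ℝ → ℝ → ℝ}
    {χ : ℝ → ℝ} (hα0 : 0 < α) (hα1 : α ≤ 1) (hk : -1 < k) (hST : S ≤ T)
    (hfc : ∀ s ∈ Ioc 1 T, ContinuousOn (fun x => f s (log s ^ (γ - 1) * x)) K)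
    (hfm : ∀ x ∈ K, AEMeasurable (fun s => f s (log s ^ (γ - 1) * x)) (volume.restrict (Ioc 1 T)))
    (hfb : ∀ s ∈ Ioc 1 T, ∀ x ∈ K, |f s (log s ^ (γ - 1) * x)| ≤ M * log s ^ k)
    (hχc : ContinuousOn χ (Ioc 1 S)) (hχK : ∀ s ∈ Ioc 1 S, log s ^ (1 - γ) * χ s ∈ K) :
    ∀ t ∈ Ioc 1 S, IntegrableOn (fun s => log (t / s) ^ (α - 1) * f s (χ s) / s) (Ioo 1 t) := by
  intro t ⟨ht, htS⟩
  have hsubS : Ioo 1 t ⊆ Ioc 1 S := Ioo_subset_Ioc_self.trans (Ioc_subset_Ioc_right htS)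
  have hsub : Ioo 1 t ⊆ Ioc 1 T := hsubS.trans (Ioc_subset_Ioc_right hST)
  have hcancel : ∀ s ∈ Ioo 1 t, f s (log s ^ (γ - 1) * (log s ^ (1 - γ) * χ s)) = f s (χ s) :=
    fun s hs => by rw [rpow_sub_one_mul_rpow_one_sub_mul (log_pos hs.1)]
  have hmeas : AEMeasurable (fun s => f s (χ s)) (volume.restrict (Ioo 1 t)) := by
    refine (aemeasurable_comp_of_continuousOn_of_aemeasurable
      (F := fun s x => f s (log s ^ (γ - 1) * x)) (X := fun s => log s ^ (1 - γ) * χ s)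
      (ae_restrict_of_forall_mem measurableSet_Ioo fun s hs => hfc s (hsub hs))
      (fun x hx => (hfm x hx).mono_measure (Measure.restrict_mono hsub le_rfl))
      ((by fun_prop : Measurable fun s => log s ^ (1 - γ)).aemeasurable.mul
        ((hχc.mono hsubS).aemeasurable measurableSet_Ioo))
      (ae_restrict_of_forall_mem measurableSet_Ioo fun s hs => hχK s (hsubS hs))).congr ?_
    exact ae_restrict_of_forall_mem measurableSet_Ioo hcancel
  obtain ⟨C, -, hkernel⟩ := exists_integral_log_div_rpow_mul_log_rpow_le hα0 hα1 hk
  refine ((hkernel t ht).1.const_mul M).mono'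
    ((((by fun_prop : Measurable fun s => log (t / s) ^ (α - 1)).aemeasurable.mul hmeas).div
      measurable_id.aemeasurable).aestronglyMeasurable) ?_
  filter_upwards [ae_restrict_mem measurableSet_Ioo] with s hs
  have hs0 : 0 < s := zero_lt_one.trans hs.1
  have hK : 0 ≤ log (t / s) ^ (α - 1) := rpow_nonneg (log_nonneg ((one_le_div hs0).2 hs.2.le)) _
  have hfs : |f s (χ s)| ≤ M * log s ^ k := hcancel s hs ▸ hfb s (hsub hs) _ (hχK s (hsubS hs))
  rw [norm_eq_abs, abs_div, abs_mul, abs_of_nonneg hK, abs_of_pos hs0]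
  calc log (t / s) ^ (α - 1) * |f s (χ s)| / s ≤ log (t / s) ^ (α - 1) * (M * log s ^ k) / s := by
        gcongr
    _ = M * (log (t / s) ^ (α - 1) * log s ^ k / s) := by ring

theorem sub_eq_mul_integral_Ioo_of_volterra {α c σ t y₁ y₂ g : ℝ} {u₁ u₂ : ℝ → ℝ}
    (hσ : 1 ≤ σ) (ht : 1 < t)
    (hy₁ : y₁ = g + c * ∫ s in (1:ℝ)..t, log (t / s) ^ (α - 1) * u₁ s / s)
    (hy₂ : y₂ = g + c * ∫ s in (1:ℝ)..t, log (t / s) ^ (α - 1) * u₂ s / s)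
    (hi₁ : IntegrableOn (fun s => log (t / s) ^ (α - 1) * u₁ s / s) (Ioo 1 t))
    (hi₂ : IntegrableOn (fun s => log (t / s) ^ (α - 1) * u₂ s / s) (Ioo 1 t))
    (heq : ∀ s ∈ Ioc 1 σ, u₁ s = u₂ s) :
    y₁ - y₂ = c * ∫ s in Ioo σ t, log (t / s) ^ (α - 1) * (u₁ s - u₂ s) / s := by
  have hvanish : ∀ s ∈ Ioo 1 t \ Ioo σ t, log (t / s) ^ (α - 1) * (u₁ s - u₂ s) / s = 0 :=
    fun s hs => by
      rw [heq s ⟨hs.1.1, not_lt.1 fun h => hs.2 ⟨h, hs.1.2⟩⟩, sub_self, mul_zero, zero_div]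
  rw [hy₁, hy₂, ← setIntegral_eq_of_subset_of_forall_sdiff_eq_zero measurableSet_Ioo
    (Ioo_subset_Ioo_left hσ) hvanish, integral_of_le ht.le, integral_of_le ht.le,
    integral_Ioc_eq_integral_Ioo, integral_Ioc_eq_integral_Ioo, add_sub_add_left_eq_sub,
    ← mul_sub, ← integral_sub hi₁ hi₂]
  simp only [mul_sub, sub_div]

theorem hadamardIneqOn_of_volterra {α k p c A T : ℝ} {g u₁ u₂ y₁ y₂ : ℝ → ℝ}
    (hα0 : 0 < α) (hα1 : α ≤ 1) (hk : -1 < k)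
    (hy₁ : ∀ t ∈ Ioc 1 T, y₁ t = g t + c * ∫ s in (1:ℝ)..t, log (t / s) ^ (α - 1) * u₁ s / s)
    (hy₂ : ∀ t ∈ Ioc 1 T, y₂ t = g t + c * ∫ s in (1:ℝ)..t, log (t / s) ^ (α - 1) * u₂ s / s)
    (hi₁ : ∀ t ∈ Ioc 1 T, IntegrableOn (fun s => log (t / s) ^ (α - 1) * u₁ s / s) (Ioo 1 t))
    (hi₂ : ∀ t ∈ Ioc 1 T, IntegrableOn (fun s => log (t / s) ^ (α - 1) * u₂ s / s) (Ioo 1 t))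
    (hc : 0 ≤ c) (hA : 0 ≤ A)
    (hu : ∀ s ∈ Ioc 1 T, |u₁ s - u₂ s| ≤ A * log s ^ k * |log s ^ p * y₁ s - log s ^ p * y₂ s|) :
    HadamardIneqOn α k p (c * A) T (fun t => |log t ^ p * y₁ t - log t ^ p * y₂ t|) := by
  intro σ t E hσ hσt htT hzero hE
  have ht : t ∈ Ioc 1 T := ⟨hσ.trans_lt hσt, htT⟩
  set D := fun s => log (t / s) ^ (α - 1) * (u₁ s - u₂ s) / s
  have hdiff : y₁ t - y₂ t = c * ∫ s in Ioo σ t, D s :=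
    sub_eq_mul_integral_Ioo_of_volterra hσ ht.1 (hy₁ t ht) (hy₂ t ht) (hi₁ t ht) (hi₂ t ht)
      fun s hs => by
        have := hu s ⟨hs.1, hs.2.trans (hσt.le.trans htT)⟩
        rwa [show |log s ^ p * y₁ s - log s ^ p * y₂ s| = 0 from hzero s hs, mul_zero,
          abs_nonpos_iff, sub_eq_zero] at this
  obtain ⟨C, -, hkernel⟩ := exists_integral_log_div_rpow_mul_log_rpow_le hα0 hα1 hk
  have hbound : ∀ s ∈ Ioo σ t, ‖D s‖ ≤ A * E * (log (t / s) ^ (α - 1) * log s ^ k / s) := by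
    intro s hs
    have hs1 : 1 < s := hσ.trans_lt hs.1
    have hs0 : 0 < s := zero_lt_one.trans hs1
    have hK : 0 ≤ log (t / s) ^ (α - 1) :=
      rpow_nonneg (log_nonneg ((one_le_div hs0).2 hs.2.le)) _
    have hAk : 0 ≤ A * log s ^ k := mul_nonneg hA (rpow_nonneg (log_nonneg hs1.le) _)
    calc ‖D s‖ = log (t / s) ^ (α - 1) * |u₁ s - u₂ s| / s := by
          simp only [D, norm_eq_abs, abs_div, abs_mul, abs_of_nonneg hK, abs_of_pos hs0]
      _ ≤ log (t / s) ^ (α - 1) * (A * log s ^ k * E) / s := by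
          gcongr
          exact (hu s ⟨hs1, hs.2.le.trans htT⟩).trans (by gcongr; exact hE s hs)
      _ = A * E * (log (t / s) ^ (α - 1) * log s ^ k / s) := by ring
  have hp : 0 ≤ log t ^ p := rpow_nonneg (log_nonneg ht.1.le) _
  calc |log t ^ p * y₁ t - log t ^ p * y₂ t| = log t ^ p * (c * ‖∫ s in Ioo σ t, D s‖) := by
        rw [← mul_sub, abs_mul, abs_of_nonneg hp, hdiff, abs_mul, abs_of_nonneg hc, norm_eq_abs]
    _ ≤ log t ^ p * (c * ∫ s in Ioo σ t, A * E * (log (t / s) ^ (α - 1) * log s ^ k / s)) := by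
        gcongr
        exact norm_integral_le_of_norm_le
          (((hkernel t ht.1).1.mono_set (Ioo_subset_Ioo_left hσ)).const_mul _)
          (ae_restrict_of_forall_mem measurableSet_Ioo hbound)
    _ = c * A * E * log t ^ p * ∫ s in Ioo σ t, log (t / s) ^ (α - 1) * log s ^ k / s := by
        rw [MeasureTheory.integral_const_mul]
        ring

theorem volterra_solution_unique_general (α β γ x₀ h b M k : ℝ) (f : ℝ → ℝ → ℝ)
    (hα0 : 0 < α) (hα1 : α < 1) (hβ0 : 0 ≤ β)
    (hγ : γ = α + β * (1 - α))
    (hk : β * (1 - α) - 1 < k)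
    (H1cont : ∀ t ∈ Set.Ioc (1:ℝ) (1 + h),
      ContinuousOn (fun x : ℝ => f t (Real.log t ^ (γ - 1) * x)) (Set.Icc (x₀ - b) (x₀ + b)))
    (H1meas : ∀ x ∈ Set.Icc (x₀ - b) (x₀ + b),
      AEMeasurable (fun t : ℝ => f t (Real.log t ^ (γ - 1) * x))
        (MeasureTheory.volume.restrict (Set.Ioc (1:ℝ) (1 + h))))
    (H1bdd : ∀ t ∈ Set.Ioc (1:ℝ) (1 + h), ∀ x ∈ Set.Icc (x₀ - b) (x₀ + b),
      |f t (Real.log t ^ (γ - 1) * x)| ≤ M * Real.log t ^ k)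
    (A : ℝ) (hA : 0 < A)
    (H2 : ∀ t ∈ Set.Ioc (1:ℝ) (1 + h), ∀ x₁ ∈ Set.Icc (x₀ - b) (x₀ + b),
      ∀ x₂ ∈ Set.Icc (x₀ - b) (x₀ + b),
      |f t (Real.log t ^ (γ - 1) * x₁) - f t (Real.log t ^ (γ - 1) * x₂)|
        ≤ A * Real.log t ^ k * |x₁ - x₂|)
    (l : ℝ) (hlh : l ≤ h)
    (φ ψ : ℝ → ℝ)
    (hφc : ContinuousOn φ (Set.Ioc 1 (1 + l))) (hψc : ContinuousOn ψ (Set.Ioc 1 (1 + l)))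
    (hφb : ∀ t ∈ Set.Ioc (1:ℝ) (1 + l), |Real.log t ^ (1 - γ) * φ t - x₀| ≤ b)
    (hψb : ∀ t ∈ Set.Ioc (1:ℝ) (1 + l), |Real.log t ^ (1 - γ) * ψ t - x₀| ≤ b)
    (hφ : ∀ t ∈ Set.Ioc (1:ℝ) (1 + l),
      φ t = x₀ * Real.log t ^ (γ - 1) +
        (1 / Real.Gamma α) * ∫ s in (1:ℝ)..t, Real.log (t / s) ^ (α - 1) * f s (φ s) / s)
    (hψ : ∀ t ∈ Set.Ioc (1:ℝ) (1 + l),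
      ψ t = x₀ * Real.log t ^ (γ - 1) +
        (1 / Real.Gamma α) * ∫ s in (1:ℝ)..t, Real.log (t / s) ^ (α - 1) * f s (ψ s) / s) :
    ∀ t ∈ Set.Ioc (1:ℝ) (1 + l), φ t = ψ t := by
  have hk' : -1 < k := by nlinarith
  have hδ : 0 < α + k + (1 - γ) := by linarith
  have hlh' : 1 + l ≤ 1 + h := by linarith
  have hmem (χ : ℝ → ℝ) (hχ : ∀ t ∈ Ioc (1:ℝ) (1 + l), |log t ^ (1 - γ) * χ t - x₀| ≤ b)
      (t : ℝ) (ht : t ∈ Ioc (1:ℝ) (1 + l)) : log t ^ (1 - γ) * χ t ∈ Icc (x₀ - b) (x₀ + b) :=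
    mem_Icc_iff_abs_le.1 ((abs_sub_comm _ _).trans_le (hχ t ht))
  have hint (χ : ℝ → ℝ) (hχc : ContinuousOn χ (Ioc 1 (1 + l)))
      (hχb : ∀ t ∈ Ioc (1:ℝ) (1 + l), |log t ^ (1 - γ) * χ t - x₀| ≤ b) :=
    integrableOn_log_div_rpow_mul_comp hα0 hα1.le hk' hlh' H1cont H1meas H1bdd hχc (hmem χ hχb)
  have hlip : ∀ s ∈ Ioc (1:ℝ) (1 + l), |f s (φ s) - f s (ψ s)| ≤
      A * log s ^ k * |log s ^ (1 - γ) * φ s - log s ^ (1 - γ) * ψ s| := fun s hs => by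
    simpa only [rpow_sub_one_mul_rpow_one_sub_mul (log_pos hs.1)] using
      H2 s ⟨hs.1, hs.2.trans hlh'⟩ _ (hmem φ hφb s hs) _ (hmem ψ hψb s hs)
  have hΓ : 0 ≤ 1 / Gamma α := (one_div_pos.2 (Gamma_pos_of_pos hα0)).le
  have hW := hadamardIneqOn_of_volterra hα0 hα1.le hk' hφ hψ (hint φ hφc hφb) (hint ψ hψc hψb)
    hΓ hA.le hlip
  intro t ht
  have hzero := hW.eq_zero hα0 hα1.le hk' hδ (mul_nonneg hΓ hA.le) (fun _ _ => abs_nonneg _)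
    (fun t ht => Real.dist_le_of_mem_Icc (hmem φ hφb t ht) (hmem ψ hψb t ht)) t ht
  rw [abs_eq_zero, sub_eq_zero] at hzero
  exact mul_left_cancel₀ (rpow_pos_of_pos (log_pos ht.1) _).ne' hzero

theorem volterra_solution_unique (α β γ x₀ h b M k : ℝ) (f : ℝ → ℝ → ℝ)
    (hα0 : 0 < α) (hα1 : α < 1) (hβ0 : 0 ≤ β) (hβ1 : β ≤ 1)
    (hγ : γ = α + β * (1 - α))
    (hh : 0 < h) (hb : 0 < b) (hM : 0 ≤ M) (hk : β * (1 - α) - 1 < k)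
    (H1cont : ∀ t ∈ Set.Ioc (1:ℝ) (1 + h),
      ContinuousOn (fun x : ℝ => f t (Real.log t ^ (γ - 1) * x)) (Set.Icc (x₀ - b) (x₀ + b)))
    (H1meas : ∀ x ∈ Set.Icc (x₀ - b) (x₀ + b),
      AEMeasurable (fun t : ℝ => f t (Real.log t ^ (γ - 1) * x))
        (MeasureTheory.volume.restrict (Set.Ioc (1:ℝ) (1 + h))))
    (H1bdd : ∀ t ∈ Set.Ioc (1:ℝ) (1 + h), ∀ x ∈ Set.Icc (x₀ - b) (x₀ + b),
      |f t (Real.log t ^ (γ - 1) * x)| ≤ M * Real.log t ^ k)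
    (A : ℝ) (hA : 0 < A)
    (H2 : ∀ t ∈ Set.Ioc (1:ℝ) (1 + h), ∀ x₁ ∈ Set.Icc (x₀ - b) (x₀ + b),
      ∀ x₂ ∈ Set.Icc (x₀ - b) (x₀ + b),
      |f t (Real.log t ^ (γ - 1) * x₁) - f t (Real.log t ^ (γ - 1) * x₂)|
        ≤ A * Real.log t ^ k * |x₁ - x₂|)
    (l : ℝ) (hl0 : 0 < l) (hlh : l ≤ h)
    (hlb : M * l ^ (α + k + 1 - γ) * (Real.Gamma (k + 1) / Real.Gamma (α + k + 1)) ≤ b)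
    (φ ψ : ℝ → ℝ)
    (hφc : ContinuousOn φ (Set.Ioc 1 (1 + l))) (hψc : ContinuousOn ψ (Set.Ioc 1 (1 + l)))
    (hφb : ∀ t ∈ Set.Ioc (1:ℝ) (1 + l), |Real.log t ^ (1 - γ) * φ t - x₀| ≤ b)
    (hψb : ∀ t ∈ Set.Ioc (1:ℝ) (1 + l), |Real.log t ^ (1 - γ) * ψ t - x₀| ≤ b)
    (hφ : ∀ t ∈ Set.Ioc (1:ℝ) (1 + l),
      φ t = x₀ * Real.log t ^ (γ - 1) +
        (1 / Real.Gamma α) * ∫ s in (1:ℝ)..t, Real.log (t / s) ^ (α - 1) * f s (φ s) / s)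
    (hψ : ∀ t ∈ Set.Ioc (1:ℝ) (1 + l),
      ψ t = x₀ * Real.log t ^ (γ - 1) +
        (1 / Real.Gamma α) * ∫ s in (1:ℝ)..t, Real.log (t / s) ^ (α - 1) * f s (ψ s) / s) :
    ∀ t ∈ Set.Ioc (1:ℝ) (1 + l), φ t = ψ t :=
  volterra_solution_unique_general α β γ x₀ h b M k f hα0 hα1 hβ0 hγ hk H1cont H1meas H1bdd A hA H2
    l hlh φ ψ hφc hψc hφb hψb hφ hψ
end
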